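/- arXiv:2506.17701 — 9 statements merged into one kernel-verified Lean document; each statement's English description precedes it below -/
import Mathlib

section
/- Let p_1,...,p_n : I → ℝ be C² functions on an open interval I with p_j'(s) ≠ 0 and F_θ(p_1(s),...,p_n(s)) ≠ 0 for all s ∈ I, satisfying the ODE system F_θ(p)·p_j''/2 = (∂F_θ/∂p_j)(p)·(p_j')² for all j. Then the function s ↦ (∏_{j=1}^n p_j'(s)) / (F_θ(p_1(s),...,p_n(s)))² is constant on I. -/
open Complex

/-- `F_θ(p) = Re(e^{-iθ} ∏ (1 + i p_j))`. -/
noncomputable def Ftheta (n : ℕ) (θ : ℝ) (p : Fin n → ℝ) : ℝ :=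
  (Complex.exp (-(θ : ℂ) * Complex.I) * ∏ j, (1 + (p j : ℂ) * Complex.I)).re

/-- for C² solutions of the ODE system, `(∏ p_j')/F_θ²` is a first integral. -/
theorem first_integral_kappa (n : ℕ) (θ a b : ℝ)
    (p p' p'' : Fin n → ℝ → ℝ)
    (hd1 : ∀ j, ∀ s ∈ Set.Ioo a b, HasDerivAt (p j) (p' j s) s)
    (hd2 : ∀ j, ∀ s ∈ Set.Ioo a b, HasDerivAt (p' j) (p'' j s) s)
    (hC2 : ∀ j, ContinuousOn (p'' j) (Set.Ioo a b))
    (hp' : ∀ j, ∀ s ∈ Set.Ioo a b, p' j s ≠ 0)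
    (hF : ∀ s ∈ Set.Ioo a b, Ftheta n θ (fun j => p j s) ≠ 0)
    (hODE : ∀ j, ∀ s ∈ Set.Ioo a b,
      Ftheta n θ (fun k => p k s) * p'' j s / 2
        = deriv (fun x => Ftheta n θ (Function.update (fun k => p k s) j x)) (p j s)
            * (p' j s) ^ 2) :
    ∀ s ∈ Set.Ioo a b, ∀ t ∈ Set.Ioo a b,
      (∏ j, p' j s) / (Ftheta n θ (fun j => p j s)) ^ 2
        = (∏ j, p' j t) / (Ftheta n θ (fun j => p j t)) ^ 2 := by
  set S := Set.Ioo a b with hS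
  set F : ℝ → ℝ := fun t => Ftheta n θ (fun j => p j t) with hFdef
  set c : Fin n → ℝ → ℂ := fun j t =>
    Complex.exp (-(θ : ℂ) * Complex.I) * ∏ k ∈ Finset.univ.erase j, (1 + (p k t : ℂ) * Complex.I)
    with hcdef
  set D : Fin n → ℝ → ℝ := fun j t => (c j t * Complex.I).re with hDdef
  -- the partial derivative of Ftheta in the j-th variable is `D j`
  have hDeq : ∀ (j : Fin n) (s : ℝ),
      deriv (fun x => Ftheta n θ (Function.update (fun k => p k s) j x)) (p j s) = D j s := by
    intro j s
    have hfun : ∀ x : ℝ, Ftheta n θ (Function.update (fun k => p k s) j x)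
        = (c j s).re + x * (c j s * Complex.I).re := by
      intro x
      have h1 : (fun k => (1 : ℂ) + ((Function.update (fun k => p k s) j x k : ℝ) : ℂ) * Complex.I)
          = Function.update (fun k => (1:ℂ) + ((p k s : ℝ) : ℂ) * Complex.I)
              j (1 + (x:ℂ) * Complex.I) := by
        funext k
        exact Function.apply_update (fun k (v : ℝ) => (1:ℂ) + (v:ℂ)*Complex.I)
          (fun k => p k s) j x k
      have h2 : (∏ k, ((1 : ℂ) + ((Function.update (fun k => p k s) j x k : ℝ) : ℂ) * Complex.I))
          = (1 + (x:ℂ) * Complex.I)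
            * ∏ k ∈ Finset.univ.erase j, ((1:ℂ) + ((p k s : ℝ) : ℂ) * Complex.I) := by
        rw [show (∏ k, ((1 : ℂ) + ((Function.update (fun k => p k s) j x k : ℝ) : ℂ) * Complex.I))
            = ∏ k, Function.update (fun k => (1:ℂ) + ((p k s : ℝ) : ℂ) * Complex.I)
                j (1 + (x:ℂ) * Complex.I) k from Finset.prod_congr rfl (fun k _ => congrFun h1 k)]
        rw [Finset.prod_update_of_mem (Finset.mem_univ j), Finset.erase_eq]
      show (Complex.exp (-(θ : ℂ) * Complex.I)
          * ∏ k, ((1 : ℂ) + ((Function.update (fun k => p k s) j x k : ℝ) : ℂ) * Complex.I)).re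
        = (c j s).re + x * (c j s * Complex.I).re
      rw [h2, hcdef]
      have h3 : Complex.exp (-(θ : ℂ) * Complex.I) * ((1 + (x:ℂ) * Complex.I)
            * ∏ k ∈ Finset.univ.erase j, ((1:ℂ) + ((p k s : ℝ) : ℂ) * Complex.I))
          = (Complex.exp (-(θ : ℂ) * Complex.I)
              * ∏ k ∈ Finset.univ.erase j, ((1:ℂ) + ((p k s : ℝ) : ℂ) * Complex.I))
            + (x:ℂ) * ((Complex.exp (-(θ : ℂ) * Complex.I)
              * ∏ k ∈ Finset.univ.erase j, ((1:ℂ) + ((p k s : ℝ) : ℂ) * Complex.I))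
              * Complex.I) := by ring
      rw [h3, Complex.add_re, Complex.re_ofReal_mul]
    have hder : HasDerivAt (fun x : ℝ => (c j s).re + x * (c j s * Complex.I).re)
        ((c j s * Complex.I).re) (p j s) := by
      simpa using ((hasDerivAt_id (p j s)).mul_const ((c j s * Complex.I).re)).const_add
        ((c j s).re)
    have : (fun x => Ftheta n θ (Function.update (fun k => p k s) j x))
        = fun x : ℝ => (c j s).re + x * (c j s * Complex.I).re := funext hfun
    rw [this, hder.deriv, hDdef]
  -- derivative of F
  have hFd : ∀ s ∈ S, HasDerivAt F (∑ j, p' j s * D j s) s := by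
    intro s hs
    have hZ : HasDerivAt (fun t => ∏ k, ((1:ℂ) + ((p k t : ℝ) : ℂ) * Complex.I))
        (∑ k, (∏ l ∈ Finset.univ.erase k, ((1:ℂ) + ((p l s : ℝ) : ℂ) * Complex.I))
          • (((p' k s : ℝ) : ℂ) * Complex.I)) s := by
      apply HasDerivAt.fun_finsetProd
      intro k _
      exact (((hd1 k s hs).ofReal_comp).mul_const Complex.I).const_add 1
    have hZ2 := hZ.const_mul (Complex.exp (-(θ : ℂ) * Complex.I))
    have hre := (Complex.reCLM.hasFDerivAt).comp_hasDerivAt s hZ2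
    have heq : (Complex.reCLM (Complex.exp (-(θ : ℂ) * Complex.I)
        * ∑ k, (∏ l ∈ Finset.univ.erase k, ((1:ℂ) + ((p l s : ℝ) : ℂ) * Complex.I))
          • (((p' k s : ℝ) : ℂ) * Complex.I))) = ∑ j, p' j s * D j s := by
      simp only [Complex.reCLM_apply, Finset.mul_sum, Complex.re_sum, hDdef, hcdef]
      refine Finset.sum_congr rfl fun k _ => ?_
      rw [smul_eq_mul, show Complex.exp (-(θ : ℂ) * Complex.I)
          * ((∏ l ∈ Finset.univ.erase k, ((1:ℂ) + ((p l s : ℝ) : ℂ) * Complex.I))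
            * (((p' k s : ℝ) : ℂ) * Complex.I))
        = ((p' k s : ℝ) : ℂ) * ((Complex.exp (-(θ : ℂ) * Complex.I)
            * ∏ l ∈ Finset.univ.erase k, ((1:ℂ) + ((p l s : ℝ) : ℂ) * Complex.I)) * Complex.I)
        from by ring, Complex.re_ofReal_mul]
    rw [heq] at hre
    exact hre
  -- derivative of the first integral is zero
  have hG : ∀ s ∈ S, HasDerivAt (fun t => (∏ j, p' j t) / (F t) ^ 2) 0 s := by
    intro s hs
    have hP : HasDerivAt (fun t => ∏ j, p' j t)
        (∑ j, (∏ k ∈ Finset.univ.erase j, p' k s) * p'' j s) s := by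
      simpa [smul_eq_mul] using HasDerivAt.fun_finsetProd (fun j (_ : j ∈ Finset.univ) => hd2 j s hs)
    have hF2 : HasDerivAt (fun t => (F t) ^ 2) (2 * F s ^ 1 * (∑ j, p' j s * D j s)) s := by
      simpa using (hFd s hs).fun_pow 2
    have hFs : F s ≠ 0 := hF s hs
    have hdiv := hP.div hF2 (pow_ne_zero 2 hFs)
    have hODE' : ∀ j : Fin n, F s * p'' j s = 2 * D j s * (p' j s) ^ 2 := by
      intro j
      have h := hODE j s hs
      rw [hDeq j s] at h
      have : F s * p'' j s / 2 = D j s * (p' j s) ^ 2 := h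
      linarith
    have hFP : F s * (∑ j, (∏ k ∈ Finset.univ.erase j, p' k s) * p'' j s)
        = 2 * (∑ j, p' j s * D j s) * ∏ j, p' j s := by
      have hterm : ∀ j : Fin n, F s * ((∏ k ∈ Finset.univ.erase j, p' k s) * p'' j s)
          = 2 * (p' j s * D j s) * ∏ k, p' k s := by
        intro j
        have h1 : F s * ((∏ k ∈ Finset.univ.erase j, p' k s) * p'' j s)
            = (∏ k ∈ Finset.univ.erase j, p' k s) * (F s * p'' j s) := by ring
        rw [h1, hODE' j,
          ← Finset.mul_prod_erase Finset.univ (fun k => p' k s) (Finset.mem_univ j)]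
        ring
      calc F s * ∑ j, (∏ k ∈ Finset.univ.erase j, p' k s) * p'' j s
          = ∑ j, F s * ((∏ k ∈ Finset.univ.erase j, p' k s) * p'' j s) := Finset.mul_sum _ _ _
        _ = ∑ j, 2 * (p' j s * D j s) * ∏ k, p' k s :=
            Finset.sum_congr rfl fun j _ => hterm j
        _ = (∑ j, 2 * (p' j s * D j s)) * ∏ k, p' k s := by rw [← Finset.sum_mul]
        _ = 2 * (∑ j, p' j s * D j s) * ∏ j, p' j s := by rw [Finset.mul_sum]
    have hnum : (∑ j, (∏ k ∈ Finset.univ.erase j, p' k s) * p'' j s) * F s ^ 2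
        - (∏ j, p' j s) * (2 * F s ^ 1 * (∑ j, p' j s * D j s)) = 0 := by
      have : (∑ j, (∏ k ∈ Finset.univ.erase j, p' k s) * p'' j s) * F s ^ 2
          - (∏ j, p' j s) * (2 * F s ^ 1 * (∑ j, p' j s * D j s))
        = F s * (F s * (∑ j, (∏ k ∈ Finset.univ.erase j, p' k s) * p'' j s))
          - F s * (2 * (∑ j, p' j s * D j s) * ∏ j, p' j s) := by ring
      rw [this, hFP]
      exact sub_self _
    rw [show ((∑ j, (∏ k ∈ Finset.univ.erase j, p' k s) * p'' j s) * F s ^ 2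
        - (∏ j, p' j s) * (2 * F s ^ 1 * (∑ j, p' j s * D j s))) / (F s ^ 2) ^ 2 = 0
      from by rw [hnum]; simp] at hdiv
    exact hdiv
  -- conclude by constancy on a convex set
  intro s hs t ht
  have hdiff : DifferentiableOn ℝ (fun t => (∏ j, p' j t) / (F t) ^ 2) S :=
    fun x hx => ((hG x hx).differentiableAt).differentiableWithinAt
  have hzero : ∀ x ∈ S, fderivWithin ℝ (fun t => (∏ j, p' j t) / (F t) ^ 2) S x = 0 := by
    intro x hx
    rw [fderivWithin_of_isOpen isOpen_Ioo hx, (hG x hx).hasFDerivAt.fderiv]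
    exact ContinuousLinearMap.ext fun y => by simp
  exact (convex_Ioo a b).is_const_of_fderivWithin_eq_zero hdiff hzero hs ht
end

section
/- Let p_1,...,p_n : I → ℝ be C² with p_j'(s) ≠ 0 and F_θ(p(s)) ≠ 0, satisfying F_θ(p)·p_j''/2 = (∂F_θ/∂p_j)(p)·(p_j')². Define ξ_j(s) = (1+p_j(s)²)/p_j'(s). Then for every j, ξ_j'(s) = 2·F_{θ+π/2}(p(s))/F_θ(p(s)); in particular, for j,k ∈ {1,...,n}, ξ_j − ξ_k is constant on I. -/
open Complex

lemma Ftheta_split (n : ℕ) (θ : ℝ) (q : Fin n → ℝ) (j : Fin n) :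
    Ftheta n θ q = ((1 + (q j : ℂ) * Complex.I) *
      (Complex.exp (-(θ : ℂ) * Complex.I) *
        ∏ k ∈ Finset.univ.erase j, (1 + (q k : ℂ) * Complex.I))).re := by
  unfold Ftheta
  congr 1
  rw [← Finset.mul_prod_erase Finset.univ _ (Finset.mem_univ j)]
  ring

lemma Ftheta_update_hasDeriv (n : ℕ) (θ : ℝ) (q : Fin n → ℝ) (j : Fin n) (y : ℝ) :
    HasDerivAt (fun x => Ftheta n θ (Function.update q j x))
      (-(Complex.exp (-(θ : ℂ) * Complex.I) *
          ∏ k ∈ Finset.univ.erase j, (1 + (q k : ℂ) * Complex.I)).im) y := by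
  set C := Complex.exp (-(θ : ℂ) * Complex.I) *
      ∏ k ∈ Finset.univ.erase j, (1 + (q k : ℂ) * Complex.I) with hC
  have hfun : ∀ x : ℝ, Ftheta n θ (Function.update q j x) = C.re - C.im * x := by
    intro x
    rw [Ftheta_split n θ _ j]
    have h1 : Function.update q j x j = x := Function.update_self j x q
    have h2 : ∏ k ∈ Finset.univ.erase j, (1 + ((Function.update q j x k : ℝ) : ℂ) * Complex.I)
        = ∏ k ∈ Finset.univ.erase j, (1 + (q k : ℂ) * Complex.I) := by
      apply Finset.prod_congr rfl
      intro k hk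
      rw [Function.update_of_ne (Finset.ne_of_mem_erase hk)]
    rw [h1, h2, ← hC]
    simp [add_mul, Complex.mul_re]
    ring
  have : HasDerivAt (fun x : ℝ => C.re - C.im * x) (-C.im) y := by
    simpa using ((hasDerivAt_id y).const_mul C.im).const_sub C.re
  exact this.congr_of_eventuallyEq (Filter.Eventually.of_forall hfun)

/-- `ξ_j' = 2 F_{θ+π/2}/F_θ`, hence `ξ_j − ξ_k` is constant. -/
theorem xi_deriv_and_difference_constant (n : ℕ) (θ a b : ℝ)
    (p p' p'' : Fin n → ℝ → ℝ)
    (hd1 : ∀ j, ∀ s ∈ Set.Ioo a b, HasDerivAt (p j) (p' j s) s)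
    (hd2 : ∀ j, ∀ s ∈ Set.Ioo a b, HasDerivAt (p' j) (p'' j s) s)
    (hC2 : ∀ j, ContinuousOn (p'' j) (Set.Ioo a b))
    (hp' : ∀ j, ∀ s ∈ Set.Ioo a b, p' j s ≠ 0)
    (hF : ∀ s ∈ Set.Ioo a b, Ftheta n θ (fun j => p j s) ≠ 0)
    (hODE : ∀ j, ∀ s ∈ Set.Ioo a b,
      Ftheta n θ (fun k => p k s) * p'' j s / 2
        = deriv (fun x => Ftheta n θ (Function.update (fun k => p k s) j x)) (p j s)
            * (p' j s) ^ 2) :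
    (∀ j, ∀ s ∈ Set.Ioo a b,
      HasDerivAt (fun t => (1 + (p j t) ^ 2) / p' j t)
        (2 * Ftheta n (θ + Real.pi / 2) (fun k => p k s) / Ftheta n θ (fun k => p k s)) s)
    ∧ (∀ j k : Fin n, ∀ s ∈ Set.Ioo a b, ∀ t ∈ Set.Ioo a b,
        (1 + (p j s) ^ 2) / p' j s - (1 + (p k s) ^ 2) / p' k s
          = (1 + (p j t) ^ 2) / p' j t - (1 + (p k t) ^ 2) / p' k t) := by
  -- main derivative claim
  have main : ∀ j, ∀ s ∈ Set.Ioo a b,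
      HasDerivAt (fun t => (1 + (p j t) ^ 2) / p' j t)
        (2 * Ftheta n (θ + Real.pi / 2) (fun k => p k s) / Ftheta n θ (fun k => p k s)) s := by
    intro j s hs
    set q : Fin n → ℝ := fun k => p k s with hq
    set C := Complex.exp (-(θ : ℂ) * Complex.I) *
        ∏ k ∈ Finset.univ.erase j, (1 + (q k : ℂ) * Complex.I) with hC
    have hDval : deriv (fun x => Ftheta n θ (Function.update q j x)) (p j s) = -C.im :=
      (Ftheta_update_hasDeriv n θ q j (p j s)).deriv
    have hFval : Ftheta n θ q = C.re - q j * C.im := by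
      rw [Ftheta_split n θ q j, ← hC]
      simp [add_mul, Complex.mul_re]
      ring
    have hGval : Ftheta n (θ + Real.pi / 2) q = C.im + q j * C.re := by
      have hexp : Complex.exp (-((θ + Real.pi / 2 : ℝ) : ℂ) * Complex.I)
          = -Complex.I * Complex.exp (-(θ : ℂ) * Complex.I) := by
        push_cast
        rw [show (-(↑θ + ↑Real.pi / 2) * Complex.I : ℂ)
            = (-(Real.pi / 2 : ℝ) : ℂ) * Complex.I + -(θ : ℂ) * Complex.I by push_cast; ring,
          Complex.exp_add]
        congr 1
        rw [Complex.exp_mul_I, ← Complex.ofReal_neg, ← Complex.ofReal_cos, ← Complex.ofReal_sin]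
        simp [Real.cos_pi_div_two, Real.sin_pi_div_two]
      rw [Ftheta_split n (θ + Real.pi / 2) q j]
      rw [hexp]
      have : (1 + (q j : ℂ) * Complex.I) * (-Complex.I *
          Complex.exp (-(θ : ℂ) * Complex.I) * ∏ k ∈ Finset.univ.erase j, (1 + (q k : ℂ) * Complex.I))
          = -Complex.I * ((1 + (q j : ℂ) * Complex.I) * C) := by rw [hC]; ring
      rw [this]
      simp [add_mul, Complex.mul_re, Complex.mul_im]
    -- the ODE
    have hode := hODE j s hs
    rw [hDval] at hode
    have hFne : Ftheta n θ q ≠ 0 := hF s hs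
    have hpne : p' j s ≠ 0 := hp' j s hs
    -- build derivative
    have h1 : HasDerivAt (fun t => 1 + (p j t) ^ 2) (2 * p j s * p' j s) s := by
      have := ((hd1 j s hs).pow 2).const_add (1 : ℝ)
      exact this.congr_deriv (by ring)
    have h2 := h1.div (hd2 j s hs) hpne
    refine h2.congr_deriv (Eq.symm ?_)
    rw [hFval] at hode hFne ⊢
    rw [hGval]
    field_simp
    have hqj : q j = p j s := rfl
    rw [div_eq_iff (by rwa [mul_comm] at hFne)]
    rw [hqj] at hode ⊢
    linear_combination (2 * (1 + p j s ^ 2)) * hode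
  refine ⟨main, ?_⟩
  intro j k s hs t ht
  set g : ℝ → ℝ := fun u => (1 + (p j u) ^ 2) / p' j u - ((1 + (p k u) ^ 2) / p' k u) with hg
  have hder : ∀ u ∈ Set.Ioo a b, HasDerivAt g 0 u := by
    intro u hu
    have := (main j u hu).sub (main k u hu)
    exact this.congr_deriv (sub_self _)
  have hconst : g s = g t := by
    apply (convex_Ioo a b).is_const_of_fderivWithin_eq_zero (𝕜 := ℝ)
      (fun u hu => ((hder u hu).differentiableAt).differentiableWithinAt) ?_ hs ht
    intro u hu
    rw [fderivWithin_of_isOpen isOpen_Ioo hu]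
    have := (hder u hu).hasFDerivAt
    rw [this.fderiv]
    ext
    simp
  simpa [hg] using hconst
end

section
/- Let p_1,...,p_n : I → ℝ be C² with p_j' ≠ 0 and F_θ(p) ≠ 0 on I, satisfying F_θ(p)·p_j''/2 = (∂F_θ/∂p_j)(p)·(p_j')², and suppose (∏_j p_j')/(F_θ(p))² = κ for a constant κ. Set ξ_j = (1+p_j²)/p_j'. Then (ξ_j')² = 4(κ·∏_{k=1}^n ξ_k − 1) on I for every j. -/
open Complex

/-- `(ξ_j')² = 4(κ ∏ ξ_k − 1)`. -/
theorem xi_deriv_sq (n : ℕ) (θ a b κ : ℝ)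
    (p p' p'' : Fin n → ℝ → ℝ)
    (hd1 : ∀ j, ∀ s ∈ Set.Ioo a b, HasDerivAt (p j) (p' j s) s)
    (hd2 : ∀ j, ∀ s ∈ Set.Ioo a b, HasDerivAt (p' j) (p'' j s) s)
    (hC2 : ∀ j, ContinuousOn (p'' j) (Set.Ioo a b))
    (hp' : ∀ j, ∀ s ∈ Set.Ioo a b, p' j s ≠ 0)
    (hF : ∀ s ∈ Set.Ioo a b, Ftheta n θ (fun j => p j s) ≠ 0)
    (hODE : ∀ j, ∀ s ∈ Set.Ioo a b,
      Ftheta n θ (fun k => p k s) * p'' j s / 2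
        = deriv (fun x => Ftheta n θ (Function.update (fun k => p k s) j x)) (p j s)
            * (p' j s) ^ 2)
    (hκ : ∀ s ∈ Set.Ioo a b,
      (∏ j, p' j s) = κ * (Ftheta n θ (fun j => p j s)) ^ 2) :
    ∀ j, ∀ s ∈ Set.Ioo a b,
      (deriv (fun t => (1 + (p j t) ^ 2) / p' j t) s) ^ 2
        = 4 * (κ * (∏ k, (1 + (p k s) ^ 2) / p' k s) - 1) := by
  intro j s hs
  classical
  have hds := hd1 j s hs
  have hdds := hd2 j s hs
  have hdj : p' j s ≠ 0 := hp' j s hs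
  have hFne := hF s hs
  have hode := hODE j s hs
  have hk := hκ s hs
  set c : ℂ := Complex.exp (-(θ : ℂ) * Complex.I) with hc
  set A : ℂ := c * ∏ k ∈ Finset.univ.erase j, (1 + (p k s : ℂ) * Complex.I) with hA
  -- Ftheta of update
  have hFt_update : ∀ x : ℝ,
      Ftheta n θ (Function.update (fun k => p k s) j x) = A.re + x * (-A.im) := by
    intro x
    have h1 : ∀ k, (1 + ((Function.update (fun k => p k s) j x k : ℝ) : ℂ) * Complex.I)
        = Function.update (fun k => 1 + ((p k s : ℝ) : ℂ) * Complex.I) j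
            (1 + (x : ℂ) * Complex.I) k := by
      intro k
      by_cases hkj : k = j
      · subst hkj; simp
      · simp [Function.update_of_ne hkj]
    have h2 : (∏ k, (1 + ((Function.update (fun k => p k s) j x k : ℝ) : ℂ) * Complex.I))
        = (1 + (x : ℂ) * Complex.I)
            * ∏ k ∈ Finset.univ.erase j, (1 + (p k s : ℂ) * Complex.I) := by
      rw [Finset.prod_congr rfl fun k _ => h1 k, Finset.prod_update_of_mem (Finset.mem_univ j),
        Finset.sdiff_singleton_eq_erase]
    unfold Ftheta
    rw [h2]
    have h3 : c * ((1 + (x : ℂ) * Complex.I)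
          * ∏ k ∈ Finset.univ.erase j, (1 + (p k s : ℂ) * Complex.I))
        = A + (x : ℂ) * (A * Complex.I) := by rw [hA]; ring
    rw [h3]
    simp [Complex.add_re, Complex.mul_re]
  have hself : Function.update (fun k => p k s) j (p j s) = fun k => p k s := by
    funext k
    by_cases hkj : k = j
    · subst hkj; simp
    · simp [Function.update_of_ne hkj]
  have hFval : Ftheta n θ (fun k => p k s) = A.re - p j s * A.im := by
    have h3 := hFt_update (p j s)
    rw [hself] at h3
    linarith [h3]
  -- derivative of update function
  have hderiv_update :
      deriv (fun x => Ftheta n θ (Function.update (fun k => p k s) j x)) (p j s) = -A.im := by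
    have heq : (fun x => Ftheta n θ (Function.update (fun k => p k s) j x))
        = fun x => A.re + x * (-A.im) := funext hFt_update
    rw [heq]
    simpa using (((hasDerivAt_id (p j s)).mul_const (-A.im)).const_add A.re).deriv
  rw [hderiv_update] at hode
  -- p'' in closed form
  have hp'' : p'' j s = -2 * A.im * (p' j s) ^ 2 / Ftheta n θ (fun k => p k s) := by
    field_simp
    linarith [hode]
  -- derivative of ξ_j
  have hnum : HasDerivAt (fun t => 1 + p j t ^ 2) (2 * p j s * p' j s) s := by
    have h := (hds.fun_pow 2).const_add 1
    refine h.congr_deriv ?_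
    ring
  have hxi : HasDerivAt (fun t => (1 + p j t ^ 2) / p' j t)
      ((2 * p j s * p' j s * p' j s - (1 + p j s ^ 2) * p'' j s) / (p' j s) ^ 2) s :=
    hnum.div hdds hdj
  -- product identities
  have hnormsq : (∏ k, (1 + p k s ^ 2)) = (1 + p j s ^ 2) * Complex.normSq A := by
    have hc1 : Complex.normSq c = 1 := by
      rw [hc]
      simp [Complex.normSq_eq_norm_sq, Complex.norm_exp]
    have h1 : Complex.normSq A = ∏ k ∈ Finset.univ.erase j, (1 + p k s ^ 2) := by
      rw [hA, map_mul, hc1, one_mul, map_prod]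
      refine Finset.prod_congr rfl fun k _ => ?_
      simp [Complex.normSq_apply]
      ring
    rw [h1, ← Finset.mul_prod_erase Finset.univ _ (Finset.mem_univ j)]
  have hpprod : (∏ k, p' k s) ≠ 0 := Finset.prod_ne_zero_iff.mpr fun k _ => hp' k s hs
  have hκ0 : κ ≠ 0 := by
    intro h
    rw [h, zero_mul] at hk
    exact hpprod hk
  have hxiprod : (∏ k, (1 + p k s ^ 2) / p' k s)
      = (∏ k, (1 + p k s ^ 2)) / (κ * (Ftheta n θ (fun k => p k s)) ^ 2) := by
    rw [Finset.prod_div_distrib, hk]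
  rw [hxi.deriv, hp'', hxiprod, hnormsq]
  rw [hFval] at hFne ⊢
  have hnorm : Complex.normSq A = A.re * A.re + A.im * A.im := Complex.normSq_apply A
  rw [hnorm]
  field_simp
  ring
end

section
/- Let α, β > 0 and ψ_1, ψ_2 ∈ ℝ satisfy α/β ≥ |tan ψ_1| and β/α ≥ |tan ψ_2|. Define p_1(s) = (α sinψ_1 cosh t + β cosψ_1 sinh t)/(α cosψ_1 cosh t − β sinψ_1 sinh t) and p_2(s) = (β sinψ_2 cosh t + α cosψ_2 sinh t)/(β cosψ_2 cosh t − α sinψ_2 sinh t), where t = s/(αβ). Then (1+ip_1(s))(1+ip_2(s)) = e^{i(ψ_1+ψ_2)}·F̂(s)·(1 + i((α²+β²)/(2αβ))·sinh(2t))/(αβ)·(αβ), where F̂(s) = αβ/((α cosψ_1 cosh t − β sinψ_1 sinh t)(β cosψ_2 cosh t − α sinψ_2 sinh t)); in particular Re(e^{-i(ψ_1+ψ_2)}(1+ip_1)(1+ip_2)) = F̂(s) > 0 for all s. -/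
open Real Complex

lemma dpos (A B : ℝ) (hA : 0 < A) (hBA : |B| ≤ A) (t : ℝ) :
    0 < A * Real.cosh t - B * Real.sinh t := by
  have hc := Real.cosh_pos t
  have h1 : |Real.sinh t| < Real.cosh t := by
    nlinarith [Real.cosh_sq t, abs_nonneg (Real.sinh t), _root_.sq_abs (Real.sinh t)]
  nlinarith [le_abs_self (B * Real.sinh t), abs_mul B (Real.sinh t),
    abs_nonneg (Real.sinh t), abs_nonneg B]

lemma euler_fac (ψ A B t : ℝ) :
    ((A * Real.cos ψ * Real.cosh t - B * Real.sin ψ * Real.sinh t : ℝ) : ℂ)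
      + (A * Real.sin ψ * Real.cosh t + B * Real.cos ψ * Real.sinh t : ℝ) * Complex.I
    = Complex.exp (↑ψ * Complex.I) * ((A * Real.cosh t : ℝ) + (B * Real.sinh t : ℝ) * Complex.I) := by
  rw [Complex.exp_mul_I, ← Complex.ofReal_cos, ← Complex.ofReal_sin]
  push_cast
  linear_combination -(↑B * Complex.sin ↑ψ * Complex.sinh ↑t) * Complex.I_sq


/-- The function `p₁` of the entire-solution ansatz on `ℂ³`. -/
noncomputable def pOne (α β ψ₁ : ℝ) (s : ℝ) : ℝ :=
  (α * Real.sin ψ₁ * Real.cosh (s / (α * β)) + β * Real.cos ψ₁ * Real.sinh (s / (α * β)))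
    / (α * Real.cos ψ₁ * Real.cosh (s / (α * β)) - β * Real.sin ψ₁ * Real.sinh (s / (α * β)))

/-- The function `p₂` of the entire-solution ansatz on `ℂ³`. -/
noncomputable def pTwo (α β ψ₂ : ℝ) (s : ℝ) : ℝ :=
  (β * Real.sin ψ₂ * Real.cosh (s / (α * β)) + α * Real.cos ψ₂ * Real.sinh (s / (α * β)))
    / (β * Real.cos ψ₂ * Real.cosh (s / (α * β)) - α * Real.sin ψ₂ * Real.sinh (s / (α * β)))

/-- `F̂(s) = αβ / (d₁(s) d₂(s))`. -/
noncomputable def Fhat (α β ψ₁ ψ₂ : ℝ) (s : ℝ) : ℝ :=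
  α * β / ((α * Real.cos ψ₁ * Real.cosh (s / (α * β)) - β * Real.sin ψ₁ * Real.sinh (s / (α * β)))
    * (β * Real.cos ψ₂ * Real.cosh (s / (α * β)) - α * Real.sin ψ₂ * Real.sinh (s / (α * β))))

/-- `(1+ip₁)(1+ip₂) = e^{i(ψ₁+ψ₂)} F̂(s) (1 + i((α²+β²)/(2αβ)) sinh 2t)`; in
particular `Re(e^{-i(ψ₁+ψ₂)}(1+ip₁)(1+ip₂)) = F̂(s) > 0`. -/
theorem product_formula_entire (α β ψ₁ ψ₂ : ℝ) (hα : 0 < α) (hβ : 0 < β)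
    (hψ₁ : |ψ₁| < Real.pi / 2) (hψ₂ : |ψ₂| < Real.pi / 2)
    (h₁ : |Real.tan ψ₁| ≤ α / β) (h₂ : |Real.tan ψ₂| ≤ β / α) :
    ∀ s : ℝ,
      (((1 : ℂ) + (pOne α β ψ₁ s : ℝ) * Complex.I) * ((1 : ℂ) + (pTwo α β ψ₂ s : ℝ) * Complex.I)
        = Complex.exp (((ψ₁ + ψ₂ : ℝ) : ℂ) * Complex.I) * (Fhat α β ψ₁ ψ₂ s : ℝ)
          * ((1 : ℂ)
            + (((α ^ 2 + β ^ 2) / (2 * α * β) * Real.sinh (2 * (s / (α * β))) : ℝ)) * Complex.I))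
      ∧ (Complex.exp (-((ψ₁ + ψ₂ : ℝ) : ℂ) * Complex.I)
          * (((1 : ℂ) + (pOne α β ψ₁ s : ℝ) * Complex.I)
            * ((1 : ℂ) + (pTwo α β ψ₂ s : ℝ) * Complex.I))).re = Fhat α β ψ₁ ψ₂ s
      ∧ 0 < Fhat α β ψ₁ ψ₂ s := by
  intro s
  set t := s / (α * β) with ht
  have hcos₁ : 0 < Real.cos ψ₁ :=
    Real.cos_pos_of_mem_Ioo ⟨by linarith [(abs_lt.1 hψ₁).1], (abs_lt.1 hψ₁).2⟩
  have hcos₂ : 0 < Real.cos ψ₂ :=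
    Real.cos_pos_of_mem_Ioo ⟨by linarith [(abs_lt.1 hψ₂).1], (abs_lt.1 hψ₂).2⟩
  have hb₁ : |β * Real.sin ψ₁| ≤ α * Real.cos ψ₁ := by
    rw [Real.tan_eq_sin_div_cos, abs_div, abs_of_pos hcos₁, div_le_div_iff₀ hcos₁ hβ] at h₁
    rw [abs_mul, abs_of_pos hβ]; nlinarith
  have hb₂ : |α * Real.sin ψ₂| ≤ β * Real.cos ψ₂ := by
    rw [Real.tan_eq_sin_div_cos, abs_div, abs_of_pos hcos₂, div_le_div_iff₀ hcos₂ hα] at h₂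
    rw [abs_mul, abs_of_pos hα]; nlinarith
  have hd₁ : 0 < α * Real.cos ψ₁ * Real.cosh t - β * Real.sin ψ₁ * Real.sinh t := by
    have := dpos (α * Real.cos ψ₁) (β * Real.sin ψ₁) (by positivity) hb₁ t
    linarith
  have hd₂ : 0 < β * Real.cos ψ₂ * Real.cosh t - α * Real.sin ψ₂ * Real.sinh t := by
    have := dpos (β * Real.cos ψ₂) (α * Real.sin ψ₂) (by positivity) hb₂ t
    linarith
  set d₁ := α * Real.cos ψ₁ * Real.cosh t - β * Real.sin ψ₁ * Real.sinh t with hdd₁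
  set d₂ := β * Real.cos ψ₂ * Real.cosh t - α * Real.sin ψ₂ * Real.sinh t with hdd₂
  set n₁ := α * Real.sin ψ₁ * Real.cosh t + β * Real.cos ψ₁ * Real.sinh t with hnn₁
  set n₂ := β * Real.sin ψ₂ * Real.cosh t + α * Real.cos ψ₂ * Real.sinh t with hnn₂
  have hp₁ : pOne α β ψ₁ s = n₁ / d₁ := rfl
  have hp₂ : pTwo α β ψ₂ s = n₂ / d₂ := rfl
  have hF : Fhat α β ψ₁ ψ₂ s = α * β / (d₁ * d₂) := rfl
  have hFpos : 0 < Fhat α β ψ₁ ψ₂ s := by rw [hF]; positivity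
  have hd₁' : (d₁ : ℂ) ≠ 0 := by exact_mod_cast hd₁.ne'
  have hd₂' : (d₂ : ℂ) ≠ 0 := by exact_mod_cast hd₂.ne'
  have habR : (0 : ℝ) < α * β := by positivity
  have e₁ : ((d₁ : ℝ) : ℂ) + (n₁ : ℝ) * Complex.I
      = Complex.exp (↑ψ₁ * Complex.I)
        * ((α * Real.cosh t : ℝ) + (β * Real.sinh t : ℝ) * Complex.I) := euler_fac ψ₁ α β t
  have e₂ : ((d₂ : ℝ) : ℂ) + (n₂ : ℝ) * Complex.I
      = Complex.exp (↑ψ₂ * Complex.I)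
        * ((β * Real.cosh t : ℝ) + (α * Real.sinh t : ℝ) * Complex.I) := euler_fac ψ₂ β α t
  have hch : (Real.cosh t) ^ 2 - (Real.sinh t) ^ 2 = 1 := Real.cosh_sq_sub_sinh_sq t
  have hexp : Complex.exp (((ψ₁ + ψ₂ : ℝ) : ℂ) * Complex.I)
      = Complex.exp (↑ψ₁ * Complex.I) * Complex.exp (↑ψ₂ * Complex.I) := by
    rw [← Complex.exp_add]; push_cast; ring_nf
  set C := (α ^ 2 + β ^ 2) / (2 * α * β) * Real.sinh (2 * t) with hC
  have key : ((d₁ : ℝ) : ℂ) + (n₁ : ℝ) * Complex.I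
      = ((d₁ : ℝ) : ℂ) + (n₁ : ℝ) * Complex.I := rfl
  have key2 : (((d₁ : ℝ) : ℂ) + (n₁ : ℝ) * Complex.I) * (((d₂ : ℝ) : ℂ) + (n₂ : ℝ) * Complex.I)
      = Complex.exp (↑ψ₁ * Complex.I) * Complex.exp (↑ψ₂ * Complex.I)
        * (((α * β : ℝ) : ℂ) + ((α * β * C : ℝ) : ℂ) * Complex.I) := by
    rw [e₁, e₂]
    have hCval : α * β * C = (α ^ 2 + β ^ 2) * (Real.sinh t * Real.cosh t) := by
      rw [hC, Real.sinh_two_mul]; field_simp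
    rw [hCval]
    push_cast [-Complex.ofReal_sinh, -Complex.ofReal_cosh]
    have hchC : ((Real.cosh t : ℝ) : ℂ) ^ 2 - ((Real.sinh t : ℝ) : ℂ) ^ 2 = 1 := by
      exact_mod_cast congrArg (Complex.ofReal) hch
    linear_combination Complex.exp (↑ψ₁ * Complex.I) * Complex.exp (↑ψ₂ * Complex.I)
        * ((↑α * ↑β) * hchC
          + ((↑α : ℂ) * ↑β * (Real.sinh t : ℂ) ^ 2) * Complex.I_sq)
  have expand₁ : (1 : ℂ) + ((n₁ / d₁ : ℝ) : ℂ) * Complex.I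
      = (((d₁ : ℝ) : ℂ) + (n₁ : ℝ) * Complex.I) / (d₁ : ℂ) := by
    push_cast; field_simp
  have expand₂ : (1 : ℂ) + ((n₂ / d₂ : ℝ) : ℂ) * Complex.I
      = (((d₂ : ℝ) : ℂ) + (n₂ : ℝ) * Complex.I) / (d₂ : ℂ) := by
    push_cast; field_simp
  have main : (((1 : ℂ) + (pOne α β ψ₁ s : ℝ) * Complex.I)
        * ((1 : ℂ) + (pTwo α β ψ₂ s : ℝ) * Complex.I)
      = Complex.exp (((ψ₁ + ψ₂ : ℝ) : ℂ) * Complex.I) * (Fhat α β ψ₁ ψ₂ s : ℝ)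
        * ((1 : ℂ) + (C : ℝ) * Complex.I)) := by
    rw [hp₁, hp₂, hF, hexp, expand₁, expand₂, div_mul_div_comm, key2]
    push_cast
    field_simp
  refine ⟨main, ?_, hFpos⟩
  rw [main]
  have hre : Complex.exp (-((ψ₁ + ψ₂ : ℝ) : ℂ) * Complex.I)
      * (Complex.exp (((ψ₁ + ψ₂ : ℝ) : ℂ) * Complex.I) * (Fhat α β ψ₁ ψ₂ s : ℝ)
        * ((1 : ℂ) + (C : ℝ) * Complex.I))
      = (Fhat α β ψ₁ ψ₂ s : ℝ) * ((1 : ℂ) + (C : ℝ) * Complex.I) := by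
    rw [show Complex.exp (-((ψ₁ + ψ₂ : ℝ) : ℂ) * Complex.I)
        * (Complex.exp (((ψ₁ + ψ₂ : ℝ) : ℂ) * Complex.I) * (Fhat α β ψ₁ ψ₂ s : ℝ)
          * ((1 : ℂ) + (C : ℝ) * Complex.I))
      = (Complex.exp (-((ψ₁ + ψ₂ : ℝ) : ℂ) * Complex.I)
          * Complex.exp (((ψ₁ + ψ₂ : ℝ) : ℂ) * Complex.I))
        * ((Fhat α β ψ₁ ψ₂ s : ℝ) * ((1 : ℂ) + (C : ℝ) * Complex.I)) from by ring,
      ← Complex.exp_add,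
      show (-(((ψ₁ + ψ₂ : ℝ)) : ℂ) * Complex.I + ((ψ₁ + ψ₂ : ℝ) : ℂ) * Complex.I) = 0 from by ring,
      Complex.exp_zero, one_mul]
  rw [hre]
  simp
end

section
/- Fix real numbers a_0, a_1, and real coefficients c_0,...,c_n satisfying the recursion c_{k−1} = a_1 c_k − a_0 c_{k+1} for k = 1,...,n−1. Suppose r_1 ≠ r_2 are the roots of r² − a_1 r + a_0 = 0. Then F(p_1,...,p_n) = Σ_{k=0}^n c_k σ_k(p) equals A·∏_{i=1}^n (p_i + r_1) + B·∏_{i=1}^n (p_i + r_2), where A = (c_{n−1} − c_n r_2)/(r_1 − r_2) and B = −(c_{n−1} − c_n r_1)/(r_1 − r_2). -/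
open Finset

/-- The `k`-th elementary symmetric polynomial of `p : Fin n → ℂ`. -/
noncomputable def esymmC (n : ℕ) (k : ℕ) (p : Fin n → ℂ) : ℂ :=
  ∑ t ∈ Finset.univ.powersetCard k, ∏ i ∈ t, p i

lemma prod_expand (n : ℕ) (p : Fin n → ℂ) (r : ℂ) :
    ∏ i, (p i + r) = ∑ k ∈ Finset.range (n+1), esymmC n k p * r^(n-k) := by
  rw [Finset.prod_add]
  rw [show (Finset.univ : Finset (Fin n)).powerset
      = (Finset.range (Finset.univ.card + 1)).disjiUnion
          (fun k => Finset.univ.powersetCard k)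
          (show Set.PairwiseDisjoint _ _ from Finset.univ.pairwise_disjoint_powersetCard.set_pairwise _) from
      (Finset.powerset_card_disjiUnion _)]
  rw [Finset.sum_disjiUnion]
  simp only [Finset.card_univ, Fintype.card_fin]
  refine Finset.sum_congr rfl fun k hk => ?_
  rw [esymmC, Finset.sum_mul]
  refine Finset.sum_congr rfl fun t ht => ?_
  have hc : t.card = k := (Finset.mem_powersetCard.1 ht).2
  rw [Finset.prod_const, Finset.card_sdiff_of_subset (Finset.subset_univ t),
    Finset.card_univ, Fintype.card_fin, hc]

/-- classification of recursive-type `F` with distinct roots. -/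
theorem recursive_type_distinct_roots (n : ℕ) (hn : 1 ≤ n) (a₀ a₁ : ℝ) (c : ℕ → ℝ)
    (hrec : ∀ k : ℕ, 1 ≤ k → k ≤ n - 1 → c (k - 1) = a₁ * c k - a₀ * c (k + 1))
    (r₁ r₂ : ℂ) (hne : r₁ ≠ r₂)
    (h₁ : r₁ ^ 2 - (a₁ : ℂ) * r₁ + (a₀ : ℂ) = 0)
    (h₂ : r₂ ^ 2 - (a₁ : ℂ) * r₂ + (a₀ : ℂ) = 0)
    (p : Fin n → ℝ) :
    (∑ k ∈ Finset.range (n + 1), (c k : ℂ) * esymmC n k (fun i => (p i : ℂ)))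
      = ((c (n - 1) : ℂ) - (c n : ℂ) * r₂) / (r₁ - r₂) * ∏ i, ((p i : ℂ) + r₁)
        + (-((c (n - 1) : ℂ) - (c n : ℂ) * r₁)) / (r₁ - r₂) * ∏ i, ((p i : ℂ) + r₂) := by
  set A : ℂ := ((c (n - 1) : ℂ) - (c n : ℂ) * r₂) / (r₁ - r₂) with hA
  set B : ℂ := (-((c (n - 1) : ℂ) - (c n : ℂ) * r₁)) / (r₁ - r₂) with hB
  have hsub : r₁ - r₂ ≠ 0 := sub_ne_zero.2 hne
  -- key: c (n - j) = A * r₁ ^ j + B * r₂ ^ j for j ≤ n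
  have key : ∀ j : ℕ, j ≤ n → (c (n - j) : ℂ) = A * r₁ ^ j + B * r₂ ^ j := by
    intro j
    induction j using Nat.strong_induction_on with
    | _ j ih =>
      match j with
      | 0 =>
        intro _
        simp only [Nat.sub_zero, pow_zero, mul_one, hA, hB]
        field_simp
        ring
      | 1 =>
        intro _
        simp only [pow_one, hA, hB]
        field_simp
        ring
      | (j+2) =>
        intro hj
        have hk1 : 1 ≤ n - (j + 1) := by omega
        have hk2 : n - (j + 1) ≤ n - 1 := by omega
        have hr := hrec (n - (j + 1)) hk1 hk2
        have e1 : n - (j + 1) - 1 = n - (j + 2) := by omega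
        have e2 : n - (j + 1) + 1 = n - j := by omega
        rw [e1, e2] at hr
        have i1 := ih (j+1) (by omega) (by omega)
        have i0 := ih j (by omega) (by omega)
        rw [hr]
        push_cast
        rw [i1, i0]
        have q1 : r₁ ^ (j + 2) = (a₁ : ℂ) * r₁ ^ (j+1) - (a₀ : ℂ) * r₁ ^ j := by
          have : r₁ ^ 2 = (a₁:ℂ) * r₁ - a₀ := by linear_combination h₁
          calc r₁ ^ (j+2) = r₁ ^ j * r₁ ^ 2 := by ring
          _ = _ := by rw [this]; ring
        have q2 : r₂ ^ (j + 2) = (a₁ : ℂ) * r₂ ^ (j+1) - (a₀ : ℂ) * r₂ ^ j := by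
          have : r₂ ^ 2 = (a₁:ℂ) * r₂ - a₀ := by linear_combination h₂
          calc r₂ ^ (j+2) = r₂ ^ j * r₂ ^ 2 := by ring
          _ = _ := by rw [this]; ring
        rw [q1, q2]; ring
  have ck : ∀ k ∈ Finset.range (n + 1),
      (c k : ℂ) * esymmC n k (fun i => (p i : ℂ))
        = A * (esymmC n k (fun i => (p i : ℂ)) * r₁ ^ (n - k))
          + B * (esymmC n k (fun i => (p i : ℂ)) * r₂ ^ (n - k)) := by
    intro k hk
    have hkn : k ≤ n := by simpa using Nat.lt_succ_iff.1 (Finset.mem_range.1 hk)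
    have := key (n - k) (by omega)
    rw [show n - (n - k) = k by omega] at this
    rw [this]; ring
  rw [Finset.sum_congr rfl ck, Finset.sum_add_distrib, ← Finset.mul_sum, ← Finset.mul_sum,
    ← prod_expand, ← prod_expand]
end

section
/- Fix u ≠ 0 and real coefficients c_0,...,c_n satisfying c_{k−1} = 2u·c_k − u²·c_{k+1} for k = 1,...,n−1. Then F(p) = Σ_{k=0}^n c_k σ_k(p) equals A·∏_{i=1}^n (p_i + u) + B·u·(d/du)(∏_{i=1}^n (p_i + u)), where A = c_n and B = c_{n−1}/u − c_n. -/
open Finset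

/-- The `k`-th elementary symmetric polynomial of `p : Fin n → ℝ`. -/
noncomputable def esymmR (n : ℕ) (k : ℕ) (p : Fin n → ℝ) : ℝ :=
  ∑ t ∈ Finset.univ.powersetCard k, ∏ i ∈ t, p i

/-- classification of recursive-type `F` with a repeated nonzero root `u`. -/
theorem recursive_type_repeated_root (n : ℕ) (hn : 1 ≤ n) (u : ℝ) (hu : u ≠ 0) (c : ℕ → ℝ)
    (hrec : ∀ k : ℕ, 1 ≤ k → k ≤ n - 1 → c (k - 1) = 2 * u * c k - u ^ 2 * c (k + 1))
    (p : Fin n → ℝ) :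
    (∑ k ∈ Finset.range (n + 1), c k * esymmR n k p)
      = c n * ∏ i, (p i + u)
        + (c (n - 1) / u - c n) * u * ∑ j, ∏ i ∈ Finset.univ.erase j, (p i + u) := by
  set A := c n with hA
  set B := c (n - 1) / u - c n with hB
  -- Step 1: closed form for the coefficients
  have key : ∀ m, m ≤ n → c (n - m) = (A + B * m) * u ^ m := by
    intro m
    induction m using Nat.strong_induction_on with
    | _ m ih =>
      match m with
      | 0 => intro _; simp [hA]
      | 1 =>
        intro h
        have : (A + B * (1:ℕ)) * u ^ 1 = c (n - 1) := by
          rw [hB, hA, Nat.cast_one, mul_one, pow_one, add_sub_cancel, div_mul_cancel₀ _ hu]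
        rw [this]
      | (m + 2) =>
        intro h
        have h1 : 1 ≤ n - (m + 1) := by omega
        have h2 : n - (m + 1) ≤ n - 1 := by omega
        have hk := hrec (n - (m + 1)) h1 h2
        have e1 : n - (m + 1) - 1 = n - (m + 2) := by omega
        have e2 : n - (m + 1) + 1 = n - m := by omega
        rw [e1, e2] at hk
        rw [hk, ih (m + 1) (by omega) (by omega), ih m (by omega) (by omega)]
        push_cast
        ring
  have key' : ∀ k, k ≤ n → c k = (A + B * (n - k : ℕ)) * u ^ (n - k) := by
    intro k hk
    have := key (n - k) (Nat.sub_le n k)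
    rwa [Nat.sub_sub_self hk] at this
  -- Step 2: expansion of products
  have expand : ∀ s : Finset (Fin n), ∏ i ∈ s, (p i + u)
      = ∑ t ∈ s.powerset, (∏ i ∈ t, p i) * u ^ (s.card - t.card) := by
    intro s
    rw [Finset.prod_add]
    refine Finset.sum_congr rfl fun t ht => ?_
    rw [Finset.prod_const, Finset.card_sdiff_of_subset (Finset.mem_powerset.mp ht)]
  have hcard : (Finset.univ : Finset (Fin n)).card = n := by simp
  -- LHS as a sum over the powerset
  have hL : (∑ k ∈ Finset.range (n + 1), c k * esymmR n k p)
      = ∑ t ∈ (Finset.univ : Finset (Fin n)).powerset, c t.card * ∏ i ∈ t, p i := by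
    rw [Finset.powerset_card_biUnion, Finset.sum_biUnion (fun i _ j _ hij => Finset.pairwise_disjoint_powersetCard _ hij), hcard]
    refine Finset.sum_congr rfl fun k _ => ?_
    rw [esymmR, Finset.mul_sum]
    refine Finset.sum_congr rfl fun t ht => ?_
    rw [(Finset.mem_powersetCard.mp ht).2]
  -- the erase sum as a sum over the powerset
  have hE : (∑ j, ∏ i ∈ Finset.univ.erase j, (p i + u))
      = ∑ t ∈ (Finset.univ : Finset (Fin n)).powerset,
          ((n - t.card : ℕ) : ℝ) * ((∏ i ∈ t, p i) * u ^ (n - 1 - t.card)) := by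
    have : (∑ j, ∏ i ∈ Finset.univ.erase j, (p i + u))
        = ∑ j : Fin n, ∑ t ∈ (Finset.univ.erase j).powerset,
            (∏ i ∈ t, p i) * u ^ (n - 1 - t.card) := by
      refine Finset.sum_congr rfl fun j _ => ?_
      rw [expand]
      refine Finset.sum_congr rfl fun t _ => ?_
      congr 2
      rw [Finset.card_erase_of_mem (Finset.mem_univ j), hcard]
    rw [this]
    rw [Finset.sum_comm' (t' := (Finset.univ : Finset (Fin n)).powerset)
      (s' := fun t => Finset.univ \ t)]
    · refine Finset.sum_congr rfl fun t _ => ?_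
      rw [Finset.sum_const, nsmul_eq_mul, Finset.card_sdiff_of_subset (Finset.subset_univ t), hcard]
    · intro j t
      simp only [Finset.mem_univ, true_and, Finset.mem_powerset, Finset.mem_sdiff,
        Finset.subset_erase, Finset.subset_univ, true_and]
      tauto
  -- put everything together
  rw [hL, hE, expand Finset.univ, hcard, Finset.mul_sum, Finset.mul_sum, ← Finset.sum_add_distrib]
  refine Finset.sum_congr rfl fun t ht => ?_
  have htn : t.card ≤ n := by
    simpa [hcard] using Finset.card_le_card (Finset.mem_powerset.mp ht)
  rw [key' t.card htn]
  rcases eq_or_lt_of_le htn with heq | hlt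
  · rw [heq]
    simp
  · have hpow : u * u ^ (n - 1 - t.card) = u ^ (n - t.card) := by
      rw [← pow_succ']
      congr 1
      omega
    rw [show B * u * (((n - t.card : ℕ) : ℝ) * ((∏ i ∈ t, p i) * u ^ (n - 1 - t.card)))
        = B * ((n - t.card : ℕ) : ℝ) * (∏ i ∈ t, p i) * (u * u ^ (n - 1 - t.card)) by ring,
      hpow]
    ring
end

section
/- Fix real a_0, a_1 and coefficients c_0,...,c_n (real) with c_{k−1} = a_1 c_k − a_0 c_{k+1} for k = 1,...,n−1, and define c_{−1} := a_1 c_0 − a_0 c_1. Let q(x) = x² + a_1 x + a_0 and F(p) = Σ_{k=0}^n c_k σ_k(p). Then for every i ∈ {1,...,n}: q'(p_i)·F − 2·q(p_i)·∂F/∂p_i = −a_1·F + 2·Σ_{k=0}^n c_{k−1} σ_k(p), as polynomials in p_1,...,p_n. -/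
open Finset

/-- `F(p) = Σ c_k σ_k(p)`. -/
noncomputable def Fpoly (n : ℕ) (c : ℕ → ℝ) (p : Fin n → ℝ) : ℝ :=
  ∑ k ∈ Finset.range (n + 1), c k * esymmR n k p

/-- `q'(p_i)F − 2q(p_i)∂F/∂p_i = −a₁F + 2Σ_{k=0}^n c_{k−1}σ_k`,
where `c_{−1} := a₁c₀ − a₀c₁`. -/
theorem structure_identity_first_step (n : ℕ) (a₀ a₁ : ℝ) (c : ℕ → ℝ)
    (hrec : ∀ k : ℕ, 1 ≤ k → k ≤ n - 1 → c (k - 1) = a₁ * c k - a₀ * c (k + 1))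
    (p : Fin n → ℝ) (i : Fin n) :
    (2 * p i + a₁) * Fpoly n c p
      - 2 * ((p i) ^ 2 + a₁ * p i + a₀)
          * deriv (fun x => Fpoly n c (Function.update p i x)) (p i)
      = -a₁ * Fpoly n c p
        + 2 * ∑ k ∈ Finset.range (n + 1),
            (if k = 0 then a₁ * c 0 - a₀ * c 1 else c (k - 1)) * esymmR n k p := by
  have hn : 0 < n := i.pos
  -- elementary symmetric functions of the variables other than `i`
  set s : ℕ → ℝ := fun k =>
    ∑ t ∈ ((univ : Finset (Fin n)).erase i).powersetCard k, ∏ j ∈ t, p j with hs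
  have hi : i ∉ (univ : Finset (Fin n)).erase i := notMem_erase i univ
  have huniv : (univ : Finset (Fin n)) = insert i ((univ : Finset (Fin n)).erase i) :=
    (insert_erase (mem_univ i)).symm
  have hsplit : ∀ (x : ℝ) (k : ℕ), esymmR n k (Function.update p i x)
      = s k + (if k = 0 then 0 else x * s (k - 1)) := by
    intro x k
    unfold esymmR
    rw [huniv]
    cases k with
    | zero => simp [hs]
    | succ k =>
      rw [Finset.powersetCard_succ_insert hi, Finset.sum_union, Finset.sum_image]
      · have h1 : ∀ t ∈ ((univ : Finset (Fin n)).erase i).powersetCard (k + 1),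
            (∏ j ∈ t, Function.update p i x j) = ∏ j ∈ t, p j := by
          intro t ht
          apply Finset.prod_congr rfl
          intro j hj
          have hji : j ≠ i := by
            have := (Finset.mem_powersetCard.mp ht).1 hj
            exact (Finset.mem_erase.mp this).1
          simp [Function.update_of_ne hji]
        have h2 : ∀ t ∈ ((univ : Finset (Fin n)).erase i).powersetCard k,
            (∏ j ∈ insert i t, Function.update p i x j) = x * ∏ j ∈ t, p j := by
          intro t ht
          have hit : i ∉ t := fun h =>
            hi ((Finset.mem_powersetCard.mp ht).1 h)
          rw [Finset.prod_insert hit, Function.update_self]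
          congr 1
          apply Finset.prod_congr rfl
          intro j hj
          have hji : j ≠ i := by
            have := (Finset.mem_powersetCard.mp ht).1 hj
            exact (Finset.mem_erase.mp this).1
          simp [Function.update_of_ne hji]
        rw [Finset.sum_congr rfl h1, Finset.sum_congr rfl h2]
        simp [hs, Finset.mul_sum]
      · -- injectivity of insert i
        intro t ht u hu htu
        have hit : i ∉ t := fun h => hi ((Finset.mem_powersetCard.mp ht).1 h)
        have hiu : i ∉ u := fun h => hi ((Finset.mem_powersetCard.mp hu).1 h)
        have := congrArg (fun v => Finset.erase v i) htu
        simpa [Finset.erase_insert hit, Finset.erase_insert hiu] using this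
      · -- disjointness
        rw [Finset.disjoint_left]
        intro t ht htim
        rcases Finset.mem_image.mp htim with ⟨u, hu, hui⟩
        have : i ∈ t := by rw [← hui]; exact Finset.mem_insert_self i u
        exact hi ((Finset.mem_powersetCard.mp ht).1 this)
  have hσ : ∀ k, esymmR n k p = s k + (if k = 0 then 0 else p i * s (k - 1)) := by
    intro k
    have := hsplit (p i) k
    rwa [Function.update_eq_self] at this
  have hsn : s n = 0 := by
    have hcard : ((univ : Finset (Fin n)).erase i).card < n := by
      rw [Finset.card_erase_of_mem (mem_univ i), Finset.card_univ, Fintype.card_fin]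
      omega
    simp only [hs]
    rw [Finset.powersetCard_eq_empty.mpr hcard, Finset.sum_empty]
  -- abbreviations
  set A : ℝ := ∑ k ∈ Finset.range (n + 1), c k * s k with hA
  set T : ℝ := ∑ k ∈ Finset.range (n + 1),
      c k * (if k = 0 then 0 else s (k - 1)) with hT
  -- the derivative equals T
  have hderiv : deriv (fun x => Fpoly n c (Function.update p i x)) (p i) = T := by
    have hfun : (fun x => Fpoly n c (Function.update p i x)) = fun x => A + x * T := by
      funext x
      unfold Fpoly
      rw [hA, hT, Finset.mul_sum, ← Finset.sum_add_distrib]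
      apply Finset.sum_congr rfl
      intro k _
      rw [hsplit x k]
      by_cases hk : k = 0 <;> simp [hk] <;> ring
    rw [hfun]
    simpa using (((hasDerivAt_id (p i)).mul_const T).const_add A).deriv
  -- F = A + p i * T
  have hF : Fpoly n c p = A + p i * T := by
    unfold Fpoly
    rw [hA, hT, Finset.mul_sum, ← Finset.sum_add_distrib]
    apply Finset.sum_congr rfl
    intro k _
    rw [hσ k]
    by_cases hk : k = 0 <;> simp [hk] <;> ring
  -- abbreviation for shifted coefficients
  set d : ℕ → ℝ := fun k => if k = 0 then a₁ * c 0 - a₀ * c 1 else c (k - 1) with hd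
  set D1 : ℝ := ∑ k ∈ Finset.range (n + 1), d k * s k with hD1
  set DT : ℝ := ∑ k ∈ Finset.range (n + 1),
      d k * (if k = 0 then 0 else s (k - 1)) with hDT
  have hRHS : (∑ k ∈ Finset.range (n + 1),
      (if k = 0 then a₁ * c 0 - a₀ * c 1 else c (k - 1)) * esymmR n k p)
      = D1 + p i * DT := by
    rw [hD1, hDT, Finset.mul_sum, ← Finset.sum_add_distrib]
    apply Finset.sum_congr rfl
    intro k _
    rw [hσ k, hd]
    by_cases hk : k = 0 <;> simp [hk] <;> ring
  -- Fact 1: DT = A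
  have hF1 : DT = A := by
    rw [hDT, Finset.sum_range_succ', hA, Finset.sum_range_succ, hsn]
    simp [hd]
  -- Fact 2: D1 = a₁ * A - a₀ * T
  have hF2 : D1 = a₁ * A - a₀ * T := by
    have hA' : A = ∑ k ∈ Finset.range n, c k * s k := by
      rw [hA, Finset.sum_range_succ, hsn]; simp
    have hT' : T = ∑ k ∈ Finset.range n, c (k + 1) * s k := by
      rw [hT, Finset.sum_range_succ']
      simp
    have hD1' : D1 = ∑ k ∈ Finset.range n, d k * s k := by
      rw [hD1, Finset.sum_range_succ, hsn]; simp
    rw [hD1', hA', hT', Finset.mul_sum, Finset.mul_sum, ← Finset.sum_sub_distrib]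
    apply Finset.sum_congr rfl
    intro k hk
    rw [Finset.mem_range] at hk
    rcases Nat.eq_zero_or_pos k with hk0 | hk1
    · subst hk0; simp [hd]; ring
    · have hkd : d k = c (k - 1) := by simp [hd, Nat.pos_iff_ne_zero.mp hk1]
      rw [hkd, hrec k hk1 (by omega)]
      ring
  rw [hF, hderiv, hRHS]
  linear_combination (-2 : ℝ) * hF2 - 2 * (p i) * hF1
end

section
/- Fix real a_0, a_1 and real coefficients c_0,...,c_n with c_{k−1} = a_1 c_k − a_0 c_{k+1} for k = 1,...,n−1. Let q(x) = x² + a_1 x + a_0 and F(p) = Σ_{k=0}^n c_k σ_k(p). Then for every i: (q'(p_i)·F − 2q(p_i)·∂F/∂p_i)² = (a_1² − 4a_0)·F² + 4(c_{n−1}² − a_1 c_{n−1} c_n + a_0 c_n²)·∏_{j=1}^n q(p_j), as an identity of polynomials in p_1,...,p_n. -/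
open Finset

noncomputable def Epoly {n : ℕ} (p : Fin n → ℝ) (k : ℕ) (t : Finset (Fin n)) : ℝ :=
  ∑ u ∈ t.powersetCard k, ∏ j ∈ u, p j

lemma Epoly_zero {n : ℕ} (p : Fin n → ℝ) (t : Finset (Fin n)) : Epoly p 0 t = 1 := by
  simp [Epoly, Finset.powersetCard_zero]

lemma Epoly_of_card_lt {n : ℕ} (p : Fin n → ℝ) {k : ℕ} {t : Finset (Fin n)}
    (h : t.card < k) : Epoly p k t = 0 := by
  simp [Epoly, Finset.powersetCard_eq_empty.2 h]

lemma Epoly_insert {n : ℕ} (p : Fin n → ℝ) (k : ℕ) {t : Finset (Fin n)} {j : Fin n}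
    (hj : j ∉ t) :
    Epoly p (k + 1) (insert j t) = Epoly p (k + 1) t + p j * Epoly p k t := by
  unfold Epoly
  rw [Finset.powersetCard_succ_insert hj, Finset.sum_union, Finset.sum_image, Finset.mul_sum]
  · congr 1
    apply Finset.sum_congr rfl
    intro u hu
    have hju : j ∉ u := fun h => hj ((Finset.mem_powersetCard.1 hu).1 h)
    rw [Finset.prod_insert hju]
  · intro u hu v hv huv
    have hju : j ∉ u := fun h => hj ((Finset.mem_powersetCard.1 hu).1 h)
    have hjv : j ∉ v := fun h => hj ((Finset.mem_powersetCard.1 hv).1 h)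
    rw [← Finset.erase_insert hju, ← Finset.erase_insert hjv, huv]
  · rw [Finset.disjoint_right]
    intro u hu
    simp only [Finset.mem_image] at hu
    obtain ⟨v, hv, rfl⟩ := hu
    intro hmem
    have := (Finset.mem_powersetCard.1 hmem).1 (Finset.mem_insert_self j v)
    exact hj this

lemma Epoly_congr {n : ℕ} {p q : Fin n → ℝ} (k : ℕ) {t : Finset (Fin n)}
    (h : ∀ j ∈ t, p j = q j) : Epoly p k t = Epoly q k t := by
  unfold Epoly
  apply Finset.sum_congr rfl
  intro u hu
  exact Finset.prod_congr rfl fun j hj => h j ((Finset.mem_powersetCard.1 hu).1 hj)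

noncomputable def Apoly {n : ℕ} (p : Fin n → ℝ) (c : ℕ → ℝ) (s : ℕ)
    (t : Finset (Fin n)) : ℝ :=
  ∑ k ∈ Finset.range (t.card + 1), c (s + k) * Epoly p k t

lemma Apoly_empty {n : ℕ} (p : Fin n → ℝ) (c : ℕ → ℝ) (s : ℕ) :
    Apoly p c s (∅ : Finset (Fin n)) = c s := by
  simp [Apoly, Epoly_zero]

lemma Apoly_congr {n : ℕ} {p q : Fin n → ℝ} (c : ℕ → ℝ) (s : ℕ) {t : Finset (Fin n)}
    (h : ∀ j ∈ t, p j = q j) : Apoly p c s t = Apoly q c s t := by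
  unfold Apoly
  exact Finset.sum_congr rfl fun k _ => by rw [Epoly_congr k h]

lemma Apoly_insert {n : ℕ} (p : Fin n → ℝ) (c : ℕ → ℝ) (s : ℕ) {t : Finset (Fin n)}
    {j : Fin n} (hj : j ∉ t) :
    Apoly p c s (insert j t) = Apoly p c s t + p j * Apoly p c (s + 1) t := by
  unfold Apoly
  rw [Finset.card_insert_of_notMem hj]
  rw [Finset.sum_range_succ' (fun k => c (s + k) * Epoly p k (insert j t))]
  simp only [Nat.add_zero, Epoly_zero]
  have h1 : ∀ k, Epoly p (k + 1) (insert j t) = Epoly p (k + 1) t + p j * Epoly p k t :=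
    fun k => Epoly_insert p k hj
  calc (∑ k ∈ Finset.range (t.card + 1), c (s + (k + 1)) * Epoly p (k + 1) (insert j t))
        + c (s + 0) * 1
      = (∑ k ∈ Finset.range (t.card + 1),
          (c (s + (k + 1)) * Epoly p (k + 1) t + p j * (c (s + 1 + k) * Epoly p k t)))
        + c s * 1 := by
        congr 1
        · apply Finset.sum_congr rfl
          intro k _
          rw [h1 k]
          have : s + 1 + k = s + (k + 1) := by omega
          rw [this]; ring
    _ = _ := by
        rw [Finset.sum_add_distrib, ← Finset.mul_sum]
        have h2 : ∑ k ∈ Finset.range (t.card + 1), c (s + (k + 1)) * Epoly p (k + 1) t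
            = ∑ k ∈ Finset.range (t.card + 1), c (s + k) * Epoly p k t - c s := by
          rw [Finset.sum_range_succ, Epoly_of_card_lt p (by omega), Finset.sum_range_succ'
            (fun k => c (s + k) * Epoly p k t)]
          simp [Epoly_zero]
        rw [h2]
        ring

lemma Arec {n : ℕ} (p : Fin n → ℝ) (a₀ a₁ : ℝ) (c : ℕ → ℝ) (s : ℕ) (t : Finset (Fin n))
    (hr : ∀ k, s ≤ k → k ≤ s + t.card → c k = a₁ * c (k + 1) - a₀ * c (k + 2)) :
    Apoly p c s t = a₁ * Apoly p c (s + 1) t - a₀ * Apoly p c (s + 2) t := by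
  unfold Apoly
  rw [Finset.mul_sum, Finset.mul_sum, ← Finset.sum_sub_distrib]
  apply Finset.sum_congr rfl
  intro k hk
  have hk' : k < t.card + 1 := Finset.mem_range.1 hk
  rw [hr (s + k) (by omega) (by omega)]
  have e1 : s + 1 + k = s + k + 1 := by omega
  have e2 : s + 2 + k = s + k + 2 := by omega
  rw [e1, e2]; ring

lemma key {n : ℕ} (a₀ a₁ : ℝ) (c : ℕ → ℝ) (p : Fin n → ℝ) (t : Finset (Fin n)) :
    ∀ s : ℕ, (∀ k, s ≤ k → k + 1 ≤ s + t.card → c k = a₁ * c (k + 1) - a₀ * c (k + 2)) →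
    Apoly p c s t ^ 2 - a₁ * Apoly p c s t * Apoly p c (s + 1) t
        + a₀ * Apoly p c (s + 1) t ^ 2
      = (c (s + t.card) ^ 2 - a₁ * c (s + t.card) * c (s + t.card + 1)
          + a₀ * c (s + t.card + 1) ^ 2)
        * ∏ j ∈ t, ((p j) ^ 2 + a₁ * p j + a₀) := by
  induction t using Finset.induction_on with
  | empty => intro s _; simp [Apoly_empty]
  | @insert j t hj ih =>
    intro s hr
    rw [Finset.card_insert_of_notMem hj] at hr ⊢
    rw [Apoly_insert p c s hj, Apoly_insert p c (s + 1) hj, Finset.prod_insert hj]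
    have hA : Apoly p c s t = a₁ * Apoly p c (s + 1) t - a₀ * Apoly p c (s + 2) t :=
      Arec p a₀ a₁ c s t (fun k h1 h2 => hr k h1 (by omega))
    have IH := ih (s + 1) (fun k h1 h2 => hr k (by omega) (by omega))
    have e : s + 1 + t.card = s + (t.card + 1) := by omega
    rw [e] at IH
    have e2 : s + 1 + 1 = s + 2 := by omega
    rw [e2] at IH
    rw [hA]
    linear_combination ((p j) ^ 2 + a₁ * p j + a₀) * IH

/-- the structure identity
`(q'(p_i)F − 2q(p_i)∂F/∂p_i)² = (a₁²−4a₀)F² + 4(c_{n−1}² − a₁c_{n−1}c_n + a₀c_n²) Π q(p_j)`. -/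
theorem structure_identity (n : ℕ) (hn : 1 ≤ n) (a₀ a₁ : ℝ) (c : ℕ → ℝ)
    (hrec : ∀ k : ℕ, 1 ≤ k → k ≤ n - 1 → c (k - 1) = a₁ * c k - a₀ * c (k + 1))
    (p : Fin n → ℝ) (i : Fin n) :
    ((2 * p i + a₁) * Fpoly n c p
        - 2 * ((p i) ^ 2 + a₁ * p i + a₀)
            * deriv (fun x => Fpoly n c (Function.update p i x)) (p i)) ^ 2
      = (a₁ ^ 2 - 4 * a₀) * (Fpoly n c p) ^ 2
        + 4 * ((c (n - 1)) ^ 2 - a₁ * c (n - 1) * c n + a₀ * (c n) ^ 2)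
            * ∏ j, ((p j) ^ 2 + a₁ * p j + a₀) := by
  classical
  have hcard : (Finset.univ : Finset (Fin n)).card = n := by simp
  have hFA : ∀ q : Fin n → ℝ, Fpoly n c q = Apoly q c 0 Finset.univ := by
    intro q
    unfold Fpoly Apoly esymmR Epoly
    rw [hcard]
    simp
  have hie : i ∉ Finset.univ.erase i := Finset.notMem_erase i _
  have hins : insert i (Finset.univ.erase i) = (Finset.univ : Finset (Fin n)) :=
    Finset.insert_erase (Finset.mem_univ i)
  set A := Apoly p c 0 (Finset.univ.erase i) with hAdef
  set B := Apoly p c 1 (Finset.univ.erase i) with hBdef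
  have hupd : ∀ x : ℝ, Fpoly n c (Function.update p i x) = A + x * B := by
    intro x
    rw [hFA, ← hins, Apoly_insert _ c 0 hie]
    have hc1 : ∀ s, Apoly (Function.update p i x) c s (Finset.univ.erase i)
        = Apoly p c s (Finset.univ.erase i) := by
      intro s
      apply Apoly_congr
      intro j hj
      exact Function.update_of_ne (Finset.ne_of_mem_erase hj) _ _
    rw [hc1 0, hc1 1, Function.update_self]
  have hF : Fpoly n c p = A + p i * B := by
    have := hupd (p i)
    rwa [Function.update_eq_self] at this
  have hderiv : deriv (fun x => Fpoly n c (Function.update p i x)) (p i) = B := by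
    have : (fun x => Fpoly n c (Function.update p i x)) = fun x => A + x * B :=
      funext hupd
    rw [this]
    simp
  have hcerase : (Finset.univ.erase i).card = n - 1 := by
    rw [Finset.card_erase_of_mem (Finset.mem_univ i), hcard]
  have hkey := key a₀ a₁ c p (Finset.univ.erase i) 0 (by
    intro k h1 h2
    rw [hcerase] at h2
    have := hrec (k + 1) (by omega) (by omega)
    simpa using this)
  rw [hcerase] at hkey
  simp only [Nat.zero_add] at hkey
  have hn1 : n - 1 + 1 = n := by omega
  rw [hn1] at hkey
  have hprod : ∏ j, ((p j) ^ 2 + a₁ * p j + a₀)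
      = ((p i) ^ 2 + a₁ * p i + a₀) * ∏ j ∈ Finset.univ.erase i, ((p j) ^ 2 + a₁ * p j + a₀) :=
    (Finset.mul_prod_erase _ _ (Finset.mem_univ i)).symm
  rw [hderiv, hF, hprod]
  rw [← hAdef, ← hBdef] at hkey
  linear_combination (4 * ((p i) ^ 2 + a₁ * p i + a₀)) * hkey
end

section
/- Let p_1,...,p_n, r : I → ℝ be C² on an open interval I, let F(p) = Σ_{k=0}^n c_k σ_k(p) and G(p) = Σ_{k=0}^n c_{k−1} σ_k(p) for fixed real constants c_{−1}, c_0,...,c_n, and suppose F(p(s))·p_i''(s)/2 = (p_i'(s))²·(∂F/∂p_i)(p(s)) for each i and F(p(s))·r''(s) = −G(p(s)) for all s ∈ I. Then f(x_1,...,x_n, s) = (1/2)Σ_{j=1}^n p_j(s)x_j² + r(s) satisfies the real Hessian equation c_n σ_{n+1}(∇²f) + c_{n−1} σ_n(∇²f) + ... + c_0 σ_1(∇²f) + c_{−1} = 0 on ℝⁿ × I. -/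
open Finset Matrix

/-- The sum of the principal `k × k` minors of a square matrix; this equals the `k`-th
elementary symmetric function of its eigenvalues. -/
noncomputable def minorSum {m : ℕ} (M : Matrix (Fin m) (Fin m) ℝ) (k : ℕ) : ℝ :=
  ∑ t ∈ Finset.univ.powersetCard k,
    (M.submatrix (Subtype.val : {x // x ∈ t} → Fin m)
      (Subtype.val : {x // x ∈ t} → Fin m)).det

/-- The Hessian matrix of `f : ℝ^m → ℝ` at `y`. -/
noncomputable def hess {m : ℕ} (f : (Fin m → ℝ) → ℝ) (y : Fin m → ℝ) :
    Matrix (Fin m) (Fin m) ℝ :=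
  fun i j => fderiv ℝ (fun z => fderiv ℝ f z (Pi.single j 1)) y (Pi.single i 1)

lemma arrow_det {ι : Type*} [DecidableEq ι] [Fintype ι] (A : Matrix ι ι ℝ) (ℓ : ι)
    (h : ∀ i j, i ≠ ℓ → j ≠ ℓ → i ≠ j → A i j = 0) :
    A.det = A ℓ ℓ * ∏ i ∈ univ.erase ℓ, A i i
      - ∑ i ∈ univ.erase ℓ, A i ℓ * A ℓ i * ∏ j ∈ (univ.erase ℓ).erase i, A j j := by
  classical
  rw [Matrix.det_apply']
  set S : Finset (Equiv.Perm ι) :=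
    insert 1 ((univ.erase ℓ).image fun i => Equiv.swap i ℓ) with hS
  have hsum : (∑ σ : Equiv.Perm ι, ((Equiv.Perm.sign σ : ℤ) : ℝ) * ∏ i, A (σ i) i)
      = ∑ σ ∈ S, ((Equiv.Perm.sign σ : ℤ) : ℝ) * ∏ i, A (σ i) i := by
    refine (Finset.sum_subset (Finset.subset_univ S) ?_).symm
    intro σ _ hσS
    have hprod : ∃ i, A (σ i) i = 0 := by
      by_contra hno
      push_neg at hno
      apply hσS
      by_cases hfix : ∀ i, i ≠ ℓ → σ i = i
      · have : σ = 1 := by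
          ext i
          by_cases hi : i = ℓ
          · simp only [Equiv.Perm.one_apply]
            rw [hi]
            by_contra hne
            have h2 : σ (σ ℓ) = σ ℓ := hfix _ hne
            exact hne (σ.injective h2)
          · simp only [Equiv.Perm.one_apply]
            exact hfix i hi
        rw [this]; exact Finset.mem_insert_self _ _
      · push_neg at hfix
        obtain ⟨i0, hi0ℓ, hi0⟩ := hfix
        have hσi0 : σ i0 = ℓ := by
          by_contra hne
          exact hno i0 (h _ _ hne hi0ℓ hi0)
        have hrest : ∀ j, j ≠ ℓ → j ≠ i0 → σ j = j := by
          intro j hjℓ hji0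
          by_contra hne
          have : σ j = ℓ := by
            by_contra hne2
            exact hno j (h _ _ hne2 hjℓ hne)
          exact hji0 (σ.injective (this.trans hσi0.symm))
        have hσℓ : σ ℓ = i0 := by
          by_contra hne
          have hσℓℓ : σ ℓ ≠ ℓ := by
            intro hh
            exact hi0ℓ (σ.injective (hσi0.trans hh.symm))
          have := hrest (σ ℓ) hσℓℓ hne
          exact hσℓℓ (σ.injective this)
        have : σ = Equiv.swap i0 ℓ := by
          ext j
          by_cases hj : j = i0
          · subst hj; rw [hσi0, Equiv.swap_apply_left]
          · by_cases hj2 : j = ℓ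
            · subst hj2; rw [hσℓ, Equiv.swap_apply_right]
            · rw [hrest j hj2 hj, Equiv.swap_apply_of_ne_of_ne hj hj2]
        rw [this]
        exact Finset.mem_insert_of_mem (Finset.mem_image.2 ⟨i0,
          Finset.mem_erase.2 ⟨hi0ℓ, Finset.mem_univ _⟩, rfl⟩)
    obtain ⟨i, hi⟩ := hprod
    rw [Finset.prod_eq_zero (f := fun j => A (σ j) j) (Finset.mem_univ i) hi, mul_zero]
  rw [hsum, hS]
  have h1 : (1 : Equiv.Perm ι) ∉ (univ.erase ℓ).image fun i => Equiv.swap i ℓ := by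
    intro hmem
    obtain ⟨i, hi, heq⟩ := Finset.mem_image.1 hmem
    have : Equiv.swap i ℓ i = (1 : Equiv.Perm ι) i := by rw [heq]
    rw [Equiv.swap_apply_left, Equiv.Perm.one_apply] at this
    exact (Finset.mem_erase.1 hi).1 this.symm
  rw [Finset.sum_insert h1]
  rw [Finset.sum_image (fun x hx y hy hxy => by
    have : Equiv.swap x ℓ ℓ = Equiv.swap y ℓ ℓ := by rw [hxy]
    rwa [Equiv.swap_apply_right, Equiv.swap_apply_right] at this)]
  have hterm1 : ((Equiv.Perm.sign (1 : Equiv.Perm ι) : ℤ) : ℝ) * ∏ i, A ((1 : Equiv.Perm ι) i) i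
      = A ℓ ℓ * ∏ i ∈ univ.erase ℓ, A i i := by
    simp [Finset.mul_prod_erase univ (fun i => A i i) (Finset.mem_univ ℓ)]
  have hterm2 : ∀ i0 ∈ univ.erase ℓ, ((Equiv.Perm.sign (Equiv.swap i0 ℓ) : ℤ) : ℝ) * ∏ i, A (Equiv.swap i0 ℓ i) i
      = -(A i0 ℓ * A ℓ i0 * ∏ j ∈ (univ.erase ℓ).erase i0, A j j) := by
    intro i0 hi0
    have hne : i0 ≠ ℓ := (Finset.mem_erase.1 hi0).1
    rw [Equiv.Perm.sign_swap hne]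
    rw [← Finset.mul_prod_erase univ (fun i => A (Equiv.swap i0 ℓ i) i) (Finset.mem_univ ℓ)]
    rw [← Finset.mul_prod_erase (univ.erase ℓ) (fun i => A (Equiv.swap i0 ℓ i) i) hi0]
    rw [Finset.prod_congr rfl (fun j hj => by
      obtain ⟨hji0, hjmem⟩ := Finset.mem_erase.1 hj
      obtain ⟨hjℓ, _⟩ := Finset.mem_erase.1 hjmem
      rw [Equiv.swap_apply_of_ne_of_ne hji0 hjℓ])]
    simp only [Equiv.swap_apply_left, Equiv.swap_apply_right]
    push_cast
    ring
  rw [hterm1, Finset.sum_congr rfl hterm2, Finset.sum_neg_distrib]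
  ring

lemma submatrix_det_arrow {m : ℕ} (M : Matrix (Fin m) (Fin m) ℝ) (τ : Finset (Fin m))
    (ℓ : Fin m) (hℓ : ℓ ∈ τ)
    (h : ∀ i ∈ τ, ∀ j ∈ τ, i ≠ ℓ → j ≠ ℓ → i ≠ j → M i j = 0) :
    (M.submatrix (Subtype.val : {x // x ∈ τ} → Fin m)
        (Subtype.val : {x // x ∈ τ} → Fin m)).det
      = M ℓ ℓ * ∏ i ∈ τ.erase ℓ, M i i
        - ∑ i ∈ τ.erase ℓ, M i ℓ * M ℓ i * ∏ j ∈ (τ.erase ℓ).erase i, M j j := by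
  classical
  have hU : (univ : Finset {x // x ∈ τ}).map (Function.Embedding.subtype _) = τ := by
    simp [Finset.univ_eq_attach, Finset.attach_map_val]
  have hmapE : ((univ : Finset {x // x ∈ τ}).erase ⟨ℓ, hℓ⟩).map (Function.Embedding.subtype _)
      = τ.erase ℓ := by
    rw [Finset.map_erase, hU]; rfl
  refine (arrow_det _ (⟨ℓ, hℓ⟩ : {x // x ∈ τ})
    (fun i j hi hj hij => h i.val i.2 j.val j.2
      (fun hh => hi (Subtype.ext hh)) (fun hh => hj (Subtype.ext hh))
      (fun hh => hij (Subtype.ext hh)))).trans ?_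
  congr 1
  · congr 1
    rw [← hmapE, Finset.prod_map]
    rfl
  · rw [← hmapE, Finset.sum_map]
    refine Finset.sum_congr rfl fun i hi => ?_
    simp only [Matrix.submatrix_apply, Function.Embedding.coe_subtype]
    congr 1
    conv_rhs => rw [show ((i : Fin m)) = Function.Embedding.subtype (fun x => x ∈ τ) i from rfl,
      ← Finset.map_erase, Finset.prod_map]
    rfl

lemma detA {n : ℕ} (M : Matrix (Fin (n+1)) (Fin (n+1)) ℝ) (d : Fin n → ℝ)
    (hdiag : ∀ i : Fin n, M i.castSucc i.castSucc = d i)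
    (hoff : ∀ i j : Fin n, i ≠ j → M i.castSucc j.castSucc = 0)
    {k : ℕ} (t : Finset (Fin n)) (htc : t.card = k + 1) :
    (M.submatrix (Subtype.val : {x // x ∈ t.map Fin.castSuccEmb} → Fin (n+1))
      Subtype.val).det = ∏ i ∈ t, d i := by
  classical
  obtain ⟨i0, hi0⟩ := Finset.card_pos.1 (by omega : 0 < t.card)
  have hmem : (i0.castSucc : Fin (n+1)) ∈ t.map Fin.castSuccEmb :=
    Finset.mem_map_of_mem _ hi0
  rw [submatrix_det_arrow M _ i0.castSucc hmem ?hz]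
  case hz =>
    intro i hi j hj _ _ hij
    obtain ⟨i', _, rfl⟩ := Finset.mem_map.1 hi
    obtain ⟨j', _, rfl⟩ := Finset.mem_map.1 hj
    exact hoff i' j' (fun hh => hij (by rw [hh]))
  rw [Finset.sum_eq_zero ?sz]
  case sz =>
    intro i hi
    obtain ⟨hine, himem⟩ := Finset.mem_erase.1 hi
    obtain ⟨i', _, rfl⟩ := Finset.mem_map.1 himem
    have hemb : (Fin.castSuccEmb i' : Fin (n+1)) = i'.castSucc := rfl
    rw [hemb, hoff i' i0 (fun hh => hine (by rw [hemb, hh]))]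
    ring
  have herase : (t.map Fin.castSuccEmb).erase i0.castSucc
      = (t.erase i0).map Fin.castSuccEmb := (Finset.map_erase _ _ _).symm
  rw [herase, Finset.prod_map]
  have : ∏ j ∈ t.erase i0, M (Fin.castSuccEmb j) (Fin.castSuccEmb j)
      = ∏ j ∈ t.erase i0, d j :=
    Finset.prod_congr rfl fun j _ => hdiag j
  rw [this, hdiag i0, sub_zero, Finset.mul_prod_erase t d hi0]

lemma detB {n : ℕ} (M : Matrix (Fin (n+1)) (Fin (n+1)) ℝ) (d w : Fin n → ℝ) (C : ℝ)
    (hdiag : ∀ i : Fin n, M i.castSucc i.castSucc = d i)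
    (hoff : ∀ i j : Fin n, i ≠ j → M i.castSucc j.castSucc = 0)
    (hcl : ∀ i : Fin n, M i.castSucc (Fin.last n) = w i)
    (hlc : ∀ i : Fin n, M (Fin.last n) i.castSucc = w i)
    (hll : M (Fin.last n) (Fin.last n) = C)
    (t : Finset (Fin n)) :
    (M.submatrix
      (Subtype.val : {x // x ∈ insert (Fin.last n) (t.map Fin.castSuccEmb)} → Fin (n+1))
      Subtype.val).det
      = C * ∏ i ∈ t, d i - ∑ i ∈ t, w i * w i * ∏ j ∈ t.erase i, d j := by
  classical
  have hlastnm : Fin.last n ∉ t.map Fin.castSuccEmb := by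
    intro h
    obtain ⟨j, _, hj⟩ := Finset.mem_map.1 h
    exact (Fin.castSucc_lt_last j).ne hj
  rw [submatrix_det_arrow M _ (Fin.last n) (Finset.mem_insert_self _ _) ?hz]
  case hz =>
    intro i hi j hj hiℓ hjℓ hij
    obtain ⟨i', _, rfl⟩ := Finset.mem_map.1 ((Finset.mem_insert.1 hi).resolve_left hiℓ)
    obtain ⟨j', _, rfl⟩ := Finset.mem_map.1 ((Finset.mem_insert.1 hj).resolve_left hjℓ)
    exact hoff i' j' (fun hh => hij (by rw [hh]))
  rw [Finset.erase_insert hlastnm, hll]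
  congr 1
  · congr 1
    rw [Finset.prod_map]
    exact Finset.prod_congr rfl fun j _ => hdiag j
  · rw [Finset.sum_map]
    refine Finset.sum_congr rfl fun i hi => ?_
    have hemb : (Fin.castSuccEmb i : Fin (n+1)) = i.castSucc := rfl
    show M (Fin.castSuccEmb i) (Fin.last n) * M (Fin.last n) (Fin.castSuccEmb i) * _ = _
    rw [hemb, hcl, hlc]
    congr 1
    rw [← hemb, ← Finset.map_erase, Finset.prod_map]
    exact Finset.prod_congr rfl fun j _ => hdiag j


section Anal
variable {n : ℕ} {a b : ℝ} {p : Fin n → ℝ → ℝ} {r : ℝ → ℝ}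

noncomputable def fF (p : Fin n → ℝ → ℝ) (r : ℝ → ℝ) : (Fin (n + 1) → ℝ) → ℝ := fun y =>
  (1 / 2) * ∑ j : Fin n, p j (y (Fin.last n)) * (y j.castSucc) ^ 2 + r (y (Fin.last n))

lemma hd1 (hp : ∀ j, ContDiffOn ℝ 2 (p j) (Set.Ioo a b)) (j : Fin n) {s : ℝ}
    (hs : s ∈ Set.Ioo a b) : DifferentiableAt ℝ (p j) s :=
  ((hp j).differentiableOn (by norm_num)).differentiableAt (isOpen_Ioo.mem_nhds hs)

lemma hd2 (hp : ∀ j, ContDiffOn ℝ 2 (p j) (Set.Ioo a b)) (j : Fin n) {s : ℝ}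
    (hs : s ∈ Set.Ioo a b) : DifferentiableAt ℝ (deriv (p j)) s :=
  ((((hp j).deriv_of_isOpen (m := 1) isOpen_Ioo (by norm_num)).differentiableOn
    (by norm_num))).differentiableAt (isOpen_Ioo.mem_nhds hs)

lemma hdr1 (hr : ContDiffOn ℝ 2 r (Set.Ioo a b)) {s : ℝ} (hs : s ∈ Set.Ioo a b) :
    DifferentiableAt ℝ r s :=
  (hr.differentiableOn (by norm_num)).differentiableAt (isOpen_Ioo.mem_nhds hs)

lemma hdr2 (hr : ContDiffOn ℝ 2 r (Set.Ioo a b)) {s : ℝ} (hs : s ∈ Set.Ioo a b) :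
    DifferentiableAt ℝ (deriv r) s :=
  ((hr.deriv_of_isOpen (m := 1) isOpen_Ioo (by norm_num)).differentiableOn
    (by norm_num)).differentiableAt (isOpen_Ioo.mem_nhds hs)

lemma hasFDerivAt_fF (hp : ∀ j, ContDiffOn ℝ 2 (p j) (Set.Ioo a b))
    (hr : ContDiffOn ℝ 2 r (Set.Ioo a b))
    (z : Fin (n + 1) → ℝ) (hz : z (Fin.last n) ∈ Set.Ioo a b) :
    HasFDerivAt (fF p r)
      ((1 / 2 : ℝ) • (∑ j : Fin n,
          (p j (z (Fin.last n)) •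
              (z j.castSucc • (ContinuousLinearMap.proj j.castSucc :
                  (Fin (n+1) → ℝ) →L[ℝ] ℝ)
                + z j.castSucc • (ContinuousLinearMap.proj j.castSucc :
                  (Fin (n+1) → ℝ) →L[ℝ] ℝ))
            + (z j.castSucc * z j.castSucc) •
                (deriv (p j) (z (Fin.last n)) • (ContinuousLinearMap.proj (Fin.last n) :
                  (Fin (n+1) → ℝ) →L[ℝ] ℝ))))
        + deriv r (z (Fin.last n)) • (ContinuousLinearMap.proj (Fin.last n) :
                  (Fin (n+1) → ℝ) →L[ℝ] ℝ)) z := by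
  have hfun : fF p r = fun y : Fin (n+1) → ℝ =>
      (1 / 2) * ∑ j : Fin n, p j (y (Fin.last n)) * ((y j.castSucc) * (y j.castSucc))
        + r (y (Fin.last n)) := by
    funext y
    simp only [fF, pow_two]
  rw [hfun]
  refine HasFDerivAt.add ?_ ?_
  · refine HasFDerivAt.const_mul ?_ _
    refine HasFDerivAt.fun_sum fun j _ => ?_
    refine HasFDerivAt.mul ?_ ?_
    · exact ((hd1 hp j hz).hasDerivAt).comp_hasFDerivAt z (hasFDerivAt_apply (Fin.last n) z)
    · exact (hasFDerivAt_apply j.castSucc z).mul (hasFDerivAt_apply j.castSucc z)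
  · exact ((hdr1 hr hz).hasDerivAt).comp_hasFDerivAt z (hasFDerivAt_apply (Fin.last n) z)


lemma inner_cs (hp : ∀ j, ContDiffOn ℝ 2 (p j) (Set.Ioo a b))
    (hr : ContDiffOn ℝ 2 r (Set.Ioo a b)) (j0 : Fin n)
    (z : Fin (n + 1) → ℝ) (hz : z (Fin.last n) ∈ Set.Ioo a b) :
    fderiv ℝ (fF p r) z (Pi.single j0.castSucc 1)
      = p j0 (z (Fin.last n)) * z j0.castSucc := by
  rw [(hasFDerivAt_fF hp hr z hz).fderiv]
  have hlast : Pi.single (M := fun _ : Fin (n+1) => ℝ) j0.castSucc 1 (Fin.last n) = 0 := by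
    simp [Pi.single_apply, (Fin.castSucc_lt_last j0).ne']
  simp only [ContinuousLinearMap.add_apply, ContinuousLinearMap.coe_smul',
    Pi.smul_apply, ContinuousLinearMap.coe_sum', Finset.sum_apply,
    ContinuousLinearMap.proj_apply, hlast, smul_eq_mul, mul_zero, add_zero, zero_mul]
  rw [Finset.sum_eq_single j0]
  · rw [Pi.single_eq_same]; ring
  · intro j _ hj
    have h0 : Pi.single (M := fun _ : Fin (n+1) => ℝ) j0.castSucc 1 j.castSucc = 0 := by
      simp [Pi.single_apply, Fin.castSucc_inj, hj]
    simp [h0]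
  · simp

lemma inner_last (hp : ∀ j, ContDiffOn ℝ 2 (p j) (Set.Ioo a b))
    (hr : ContDiffOn ℝ 2 r (Set.Ioo a b))
    (z : Fin (n + 1) → ℝ) (hz : z (Fin.last n) ∈ Set.Ioo a b) :
    fderiv ℝ (fF p r) z (Pi.single (Fin.last n) 1)
      = (1 / 2) * ∑ j : Fin n, deriv (p j) (z (Fin.last n)) * (z j.castSucc) ^ 2
          + deriv r (z (Fin.last n)) := by
  rw [(hasFDerivAt_fF hp hr z hz).fderiv]
  have hne : ∀ j : Fin n, (Pi.single (M := fun _ : Fin (n+1) => ℝ) (Fin.last n) 1) j.castSucc = 0 := fun j =>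
    by simp [Pi.single_apply, (Fin.castSucc_lt_last j).ne]
  simp only [ContinuousLinearMap.add_apply, ContinuousLinearMap.coe_smul',
    Pi.smul_apply, ContinuousLinearMap.coe_sum', Finset.sum_apply,
    ContinuousLinearMap.proj_apply, hne, smul_eq_mul, mul_zero, zero_add,
    Pi.single_eq_same, mul_one, add_zero]
  congr 1
  rw [Finset.mul_sum, Finset.mul_sum]
  exact Finset.sum_congr rfl fun j _ => by ring



lemma hasFDerivAt_gcs (hp : ∀ j, ContDiffOn ℝ 2 (p j) (Set.Ioo a b)) (j0 : Fin n)
    (z : Fin (n + 1) → ℝ) (hz : z (Fin.last n) ∈ Set.Ioo a b) :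
    HasFDerivAt (fun z : Fin (n+1) → ℝ => p j0 (z (Fin.last n)) * z j0.castSucc)
      (p j0 (z (Fin.last n)) • (ContinuousLinearMap.proj j0.castSucc :
          (Fin (n+1) → ℝ) →L[ℝ] ℝ)
        + z j0.castSucc • (deriv (p j0) (z (Fin.last n)) •
            (ContinuousLinearMap.proj (Fin.last n) : (Fin (n+1) → ℝ) →L[ℝ] ℝ))) z :=
  ((hd1 hp j0 hz).hasDerivAt.comp_hasFDerivAt z
    (hasFDerivAt_apply (Fin.last n) z)).mul (hasFDerivAt_apply j0.castSucc z)

lemma hasFDerivAt_glast (hp : ∀ j, ContDiffOn ℝ 2 (p j) (Set.Ioo a b))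
    (hr : ContDiffOn ℝ 2 r (Set.Ioo a b))
    (z : Fin (n + 1) → ℝ) (hz : z (Fin.last n) ∈ Set.Ioo a b) :
    HasFDerivAt (fun z : Fin (n+1) → ℝ =>
        (1 / 2) * ∑ j : Fin n, deriv (p j) (z (Fin.last n)) * (z j.castSucc) ^ 2
          + deriv r (z (Fin.last n)))
      ((1 / 2 : ℝ) • (∑ j : Fin n,
          (deriv (p j) (z (Fin.last n)) •
              (z j.castSucc • (ContinuousLinearMap.proj j.castSucc :
                  (Fin (n+1) → ℝ) →L[ℝ] ℝ)
                + z j.castSucc • (ContinuousLinearMap.proj j.castSucc :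
                  (Fin (n+1) → ℝ) →L[ℝ] ℝ))
            + (z j.castSucc * z j.castSucc) •
                (deriv (deriv (p j)) (z (Fin.last n)) •
                  (ContinuousLinearMap.proj (Fin.last n) : (Fin (n+1) → ℝ) →L[ℝ] ℝ))))
        + deriv (deriv r) (z (Fin.last n)) •
            (ContinuousLinearMap.proj (Fin.last n) : (Fin (n+1) → ℝ) →L[ℝ] ℝ)) z := by
  have hfun : (fun z : Fin (n+1) → ℝ =>
      (1 / 2) * ∑ j : Fin n, deriv (p j) (z (Fin.last n)) * (z j.castSucc) ^ 2
        + deriv r (z (Fin.last n)))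
      = fun z : Fin (n+1) → ℝ =>
      (1 / 2) * ∑ j : Fin n, deriv (p j) (z (Fin.last n)) * ((z j.castSucc) * (z j.castSucc))
        + deriv r (z (Fin.last n)) := by
    funext y
    simp only [pow_two]
  rw [hfun]
  refine HasFDerivAt.add ?_ ?_
  · refine HasFDerivAt.const_mul ?_ _
    refine HasFDerivAt.fun_sum fun j _ => ?_
    refine HasFDerivAt.mul ?_ ?_
    · exact ((hd2 hp j hz).hasDerivAt).comp_hasFDerivAt (f := fun z : Fin (n+1) → ℝ => z (Fin.last n)) z (hasFDerivAt_apply (Fin.last n) z)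
    · exact (hasFDerivAt_apply j.castSucc z).mul (hasFDerivAt_apply j.castSucc z)
  · exact ((hdr2 hr hz).hasDerivAt).comp_hasFDerivAt (f := fun z : Fin (n+1) → ℝ => z (Fin.last n)) z (hasFDerivAt_apply (Fin.last n) z)

section Entries
variable (x : Fin n → ℝ) {s : ℝ}

lemma snoc_mem (hs : s ∈ Set.Ioo a b) :
    (Fin.snoc x s : Fin (n+1) → ℝ) (Fin.last n) ∈ Set.Ioo a b := by
  rw [Fin.snoc_last]; exact hs

lemma ev_cs (hs : s ∈ Set.Ioo a b) (hp : ∀ j, ContDiffOn ℝ 2 (p j) (Set.Ioo a b))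
    (hr : ContDiffOn ℝ 2 r (Set.Ioo a b)) (j : Fin n) :
    (fun z => fderiv ℝ (fF p r) z (Pi.single j.castSucc 1))
      =ᶠ[nhds (Fin.snoc x s : Fin (n+1) → ℝ)]
      (fun z => p j (z (Fin.last n)) * z j.castSucc) := by
  have hU : IsOpen {z : Fin (n+1) → ℝ | z (Fin.last n) ∈ Set.Ioo a b} :=
    IsOpen.preimage (continuous_apply _) isOpen_Ioo
  exact Filter.eventually_of_mem (hU.mem_nhds (snoc_mem x hs))
    (fun z hz => inner_cs hp hr j z hz)

lemma ev_last (hs : s ∈ Set.Ioo a b) (hp : ∀ j, ContDiffOn ℝ 2 (p j) (Set.Ioo a b))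
    (hr : ContDiffOn ℝ 2 r (Set.Ioo a b)) :
    (fun z => fderiv ℝ (fF p r) z (Pi.single (Fin.last n) 1))
      =ᶠ[nhds (Fin.snoc x s : Fin (n+1) → ℝ)]
      (fun z => (1 / 2) * ∑ j : Fin n, deriv (p j) (z (Fin.last n)) * (z j.castSucc) ^ 2
          + deriv r (z (Fin.last n))) := by
  have hU : IsOpen {z : Fin (n+1) → ℝ | z (Fin.last n) ∈ Set.Ioo a b} :=
    IsOpen.preimage (continuous_apply _) isOpen_Ioo
  exact Filter.eventually_of_mem (hU.mem_nhds (snoc_mem x hs))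
    (fun z hz => inner_last hp hr z hz)

lemma hess_cc (hs : s ∈ Set.Ioo a b) (hp : ∀ j, ContDiffOn ℝ 2 (p j) (Set.Ioo a b))
    (hr : ContDiffOn ℝ 2 r (Set.Ioo a b)) (i j : Fin n) :
    hess (fF p r) (Fin.snoc x s) i.castSucc j.castSucc = if i = j then p j s else 0 := by
  show fderiv ℝ (fun z => fderiv ℝ (fF p r) z (Pi.single j.castSucc 1)) (Fin.snoc x s)
      (Pi.single i.castSucc 1) = _
  rw [(ev_cs x hs hp hr j).fderiv_eq]
  rw [(hasFDerivAt_gcs hp j _ (snoc_mem x hs)).fderiv]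
  have h1 : Pi.single (M := fun _ : Fin (n+1) => ℝ) i.castSucc 1 (Fin.last n) = 0 := by
    simp [Pi.single_apply, (Fin.castSucc_lt_last i).ne']
  have h2 : Pi.single (M := fun _ : Fin (n+1) => ℝ) i.castSucc 1 j.castSucc
      = if i = j then 1 else 0 := by
    simp [Pi.single_apply, Fin.castSucc_inj, eq_comm]
  simp only [ContinuousLinearMap.add_apply, ContinuousLinearMap.coe_smul', Pi.smul_apply,
    ContinuousLinearMap.proj_apply, h1, h2, smul_eq_mul, mul_zero, add_zero,
    Fin.snoc_last]
  split_ifs <;> simp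

lemma hess_cl (hs : s ∈ Set.Ioo a b) (hp : ∀ j, ContDiffOn ℝ 2 (p j) (Set.Ioo a b))
    (hr : ContDiffOn ℝ 2 r (Set.Ioo a b)) (i : Fin n) :
    hess (fF p r) (Fin.snoc x s) i.castSucc (Fin.last n) = deriv (p i) s * x i := by
  show fderiv ℝ (fun z => fderiv ℝ (fF p r) z (Pi.single (Fin.last n) 1)) (Fin.snoc x s)
      (Pi.single i.castSucc 1) = _
  rw [(ev_last x hs hp hr).fderiv_eq]
  rw [(hasFDerivAt_glast hp hr _ (snoc_mem x hs)).fderiv]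
  have h1 : Pi.single (M := fun _ : Fin (n+1) => ℝ) i.castSucc 1 (Fin.last n) = 0 := by
    simp [Pi.single_apply, (Fin.castSucc_lt_last i).ne']
  simp only [ContinuousLinearMap.add_apply, ContinuousLinearMap.coe_smul', Pi.smul_apply,
    ContinuousLinearMap.coe_sum', Finset.sum_apply, ContinuousLinearMap.proj_apply, h1,
    smul_eq_mul, mul_zero, add_zero, zero_mul, Fin.snoc_last]
  rw [Finset.sum_eq_single i]
  · rw [Pi.single_eq_same, Fin.snoc_castSucc]; ring
  · intro j _ hj
    have h0 : Pi.single (M := fun _ : Fin (n+1) => ℝ) i.castSucc 1 j.castSucc = 0 := by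
      simp [Pi.single_apply, Fin.castSucc_inj, hj.symm]
    simp [h0]
  · simp

lemma hess_lc (hs : s ∈ Set.Ioo a b) (hp : ∀ j, ContDiffOn ℝ 2 (p j) (Set.Ioo a b))
    (hr : ContDiffOn ℝ 2 r (Set.Ioo a b)) (j : Fin n) :
    hess (fF p r) (Fin.snoc x s) (Fin.last n) j.castSucc = deriv (p j) s * x j := by
  show fderiv ℝ (fun z => fderiv ℝ (fF p r) z (Pi.single j.castSucc 1)) (Fin.snoc x s)
      (Pi.single (Fin.last n) 1) = _
  rw [(ev_cs x hs hp hr j).fderiv_eq]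
  rw [(hasFDerivAt_gcs hp j _ (snoc_mem x hs)).fderiv]
  have h1 : Pi.single (M := fun _ : Fin (n+1) => ℝ) (Fin.last n) 1 j.castSucc = 0 := by
    simp [Pi.single_apply, (Fin.castSucc_lt_last j).ne]
  simp only [ContinuousLinearMap.add_apply, ContinuousLinearMap.coe_smul', Pi.smul_apply,
    ContinuousLinearMap.proj_apply, h1, smul_eq_mul, mul_zero, zero_add,
    Pi.single_eq_same, mul_one, Fin.snoc_last, Fin.snoc_castSucc]
  ring

lemma hess_ll (hs : s ∈ Set.Ioo a b) (hp : ∀ j, ContDiffOn ℝ 2 (p j) (Set.Ioo a b))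
    (hr : ContDiffOn ℝ 2 r (Set.Ioo a b)) :
    hess (fF p r) (Fin.snoc x s) (Fin.last n) (Fin.last n)
      = (1 / 2) * ∑ j : Fin n, deriv (deriv (p j)) s * (x j) ^ 2 + deriv (deriv r) s := by
  show fderiv ℝ (fun z => fderiv ℝ (fF p r) z (Pi.single (Fin.last n) 1)) (Fin.snoc x s)
      (Pi.single (Fin.last n) 1) = _
  rw [(ev_last x hs hp hr).fderiv_eq]
  rw [(hasFDerivAt_glast hp hr _ (snoc_mem x hs)).fderiv]
  have hne : ∀ j : Fin n,
      Pi.single (M := fun _ : Fin (n+1) => ℝ) (Fin.last n) 1 j.castSucc = 0 := fun j => by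
    simp [Pi.single_apply, (Fin.castSucc_lt_last j).ne]
  simp only [ContinuousLinearMap.add_apply, ContinuousLinearMap.coe_smul', Pi.smul_apply,
    ContinuousLinearMap.coe_sum', Finset.sum_apply, ContinuousLinearMap.proj_apply, hne,
    smul_eq_mul, mul_zero, zero_add, Pi.single_eq_same, mul_one, add_zero,
    Fin.snoc_last, Fin.snoc_castSucc]
  congr 1
  rw [Finset.mul_sum, Finset.mul_sum]
  exact Finset.sum_congr rfl fun j _ => by ring

end Entries
end Anal


lemma esymmR_update {n : ℕ} (k : ℕ) (q : Fin n → ℝ) (i : Fin n) (x : ℝ) :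
    esymmR n k (Function.update q i x)
      = (∑ t ∈ (Finset.univ.powersetCard k).filter (fun t => i ∉ t), ∏ j ∈ t, q j)
        + x * ∑ t ∈ (Finset.univ.powersetCard k).filter (fun t => i ∈ t),
            ∏ j ∈ t.erase i, q j := by
  classical
  unfold esymmR
  rw [← Finset.sum_filter_add_sum_filter_not (Finset.univ.powersetCard k) (fun t => i ∈ t)]
  rw [add_comm]
  congr 1
  · refine Finset.sum_congr rfl fun t ht => ?_
    have hit : i ∉ t := (Finset.mem_filter.1 ht).2
    refine Finset.prod_congr rfl fun j hj => Function.update_of_ne (fun h => hit ?_) _ _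
    rwa [h] at hj
  · rw [Finset.mul_sum]
    refine Finset.sum_congr rfl fun t ht => ?_
    have hit : i ∈ t := (Finset.mem_filter.1 ht).2
    rw [← Finset.mul_prod_erase t _ hit, Function.update_self]
    congr 1
    exact Finset.prod_congr rfl fun j hj =>
      Function.update_of_ne (Finset.ne_of_mem_erase hj) _ _

lemma deriv_F_update {n : ℕ} (c : ℕ → ℝ) (q : Fin n → ℝ) (i : Fin n) (x0 : ℝ) :
    deriv (fun x => ∑ k ∈ Finset.range (n + 1), c k * esymmR n k (Function.update q i x)) x0
      = ∑ k ∈ Finset.range (n + 1), c k *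
          ∑ t ∈ (Finset.univ.powersetCard k).filter (fun t => i ∈ t),
            ∏ j ∈ t.erase i, q j := by
  classical
  have hfun : (fun x => ∑ k ∈ Finset.range (n + 1), c k * esymmR n k (Function.update q i x))
      = fun x => (∑ k ∈ Finset.range (n + 1), c k *
            ∑ t ∈ (Finset.univ.powersetCard k).filter (fun t => i ∉ t), ∏ j ∈ t, q j)
          + x * ∑ k ∈ Finset.range (n + 1), c k *
            ∑ t ∈ (Finset.univ.powersetCard k).filter (fun t => i ∈ t),
              ∏ j ∈ t.erase i, q j := by
    funext x
    simp only [esymmR_update, mul_add]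
    rw [Finset.sum_add_distrib, Finset.mul_sum]
    congr 1
    exact Finset.sum_congr rfl fun k _ => by ring
  rw [hfun]
  have h := ((hasDerivAt_id x0).mul_const (∑ k ∈ Finset.range (n + 1), c k *
      ∑ t ∈ (Finset.univ.powersetCard k).filter (fun t => i ∈ t),
        ∏ j ∈ t.erase i, q j)).const_add (∑ k ∈ Finset.range (n + 1), c k *
      ∑ t ∈ (Finset.univ.powersetCard k).filter (fun t => i ∉ t), ∏ j ∈ t, q j)
  simpa using h.deriv


lemma last_not_mem_map {n : ℕ} (t : Finset (Fin n)) :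
    Fin.last n ∉ t.map Fin.castSuccEmb := by
  intro h
  obtain ⟨j, _, hj⟩ := Finset.mem_map.1 h
  exact (Fin.castSucc_lt_last j).ne (by exact hj)

lemma univ_fin_succ {n : ℕ} :
    (Finset.univ : Finset (Fin (n+1)))
      = insert (Fin.last n) ((Finset.univ : Finset (Fin n)).map Fin.castSuccEmb) := by
  ext x
  simp only [Finset.mem_univ, true_iff, Finset.mem_insert, Finset.mem_map]
  rcases Fin.eq_castSucc_or_eq_last x with ⟨j, rfl⟩ | rfl
  · exact Or.inr ⟨j, trivial, rfl⟩
  · exact Or.inl rfl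

lemma minorSum_split {n k : ℕ} (M : Matrix (Fin (n+1)) (Fin (n+1)) ℝ) :
    minorSum M (k+1)
      = (∑ t ∈ (Finset.univ : Finset (Fin n)).powersetCard (k+1),
          (M.submatrix
            (Subtype.val : {x // x ∈ t.map Fin.castSuccEmb} → Fin (n+1))
            Subtype.val).det)
        + ∑ t ∈ (Finset.univ : Finset (Fin n)).powersetCard k,
          (M.submatrix
            (Subtype.val : {x // x ∈ insert (Fin.last n) (t.map Fin.castSuccEmb)} → Fin (n+1))
            Subtype.val).det := by
  classical
  unfold minorSum
  rw [show ((Finset.univ : Finset (Fin (n+1))).powersetCard (k+1))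
      = ((insert (Fin.last n) ((Finset.univ : Finset (Fin n)).map Fin.castSuccEmb)).powersetCard (k+1))
    from by rw [← univ_fin_succ]]
  rw [Finset.powersetCard_succ_insert (last_not_mem_map _)]
  rw [Finset.sum_union ?disj]
  case disj =>
    rw [Finset.disjoint_left]
    intro τ hτ1 hτ2
    obtain ⟨t, _, rfl⟩ := Finset.mem_image.1 hτ2
    have hsub := (Finset.mem_powersetCard.1 hτ1).1
    exact last_not_mem_map _ (hsub (Finset.mem_insert_self _ _))
  congr 1
  · rw [Finset.powersetCard_map, Finset.sum_map]
    rfl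
  · rw [Finset.sum_image ?inj, Finset.powersetCard_map, Finset.sum_map]
    case inj =>
      intro t1 h1 t2 h2 heq
      have e1 : t1 = (insert (Fin.last n) t1).erase (Fin.last n) := by
        rw [Finset.erase_insert]
        intro hc
        exact last_not_mem_map _ ((Finset.mem_powersetCard.1 h1).1 hc)
      have e2 : t2 = (insert (Fin.last n) t2).erase (Fin.last n) := by
        rw [Finset.erase_insert]
        intro hc
        exact last_not_mem_map _ ((Finset.mem_powersetCard.1 h2).1 hc)
      rw [e1, e2, heq]
    rfl



lemma esymmR_zero {n : ℕ} (q : Fin n → ℝ) : esymmR n 0 q = 1 := by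
  unfold esymmR
  simp [Finset.powersetCard_zero]

lemma esymmR_top {n : ℕ} (q : Fin n → ℝ) : esymmR n (n + 1) q = 0 := by
  unfold esymmR
  rw [Finset.powersetCard_eq_empty.2 (by simp)]
  simp


/-- if `p₁,…,pₙ,r` solve the ODE system `F(p)p_i''/2 = (p_i')² ∂F/∂p_i`,
`F(p)r'' = −G(p)`, then `f(x,s) = (1/2)Σ p_j(s)x_j² + r(s)` solves the real Hessian equation
`c_n σ_{n+1}(∇²f) + ⋯ + c₀ σ₁(∇²f) + c₋₁ = 0` on `ℝⁿ × I`. -/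
theorem hessian_equation_of_ODE (n : ℕ) (a b : ℝ) (cneg : ℝ) (c : ℕ → ℝ)
    (p : Fin n → ℝ → ℝ) (r : ℝ → ℝ)
    (hp : ∀ j, ContDiffOn ℝ 2 (p j) (Set.Ioo a b)) (hr : ContDiffOn ℝ 2 r (Set.Ioo a b))
    (hODEp : ∀ i : Fin n, ∀ s ∈ Set.Ioo a b,
      (∑ k ∈ Finset.range (n + 1), c k * esymmR n k (fun j => p j s))
          * deriv (deriv (p i)) s / 2
        = (deriv (p i) s) ^ 2
            * deriv (fun x => ∑ k ∈ Finset.range (n + 1),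
                c k * esymmR n k (Function.update (fun j => p j s) i x)) (p i s))
    (hODEr : ∀ s ∈ Set.Ioo a b,
      (∑ k ∈ Finset.range (n + 1), c k * esymmR n k (fun j => p j s)) * deriv (deriv r) s
        = - ∑ k ∈ Finset.range (n + 1),
            (if k = 0 then cneg else c (k - 1)) * esymmR n k (fun j => p j s)) :
    ∀ x : Fin n → ℝ, ∀ s ∈ Set.Ioo a b,
      cneg + ∑ k ∈ Finset.range (n + 1),
          c k * minorSum
            (hess (fun y : Fin (n + 1) → ℝ =>
              (1 / 2) * ∑ j : Fin n, p j (y (Fin.last n)) * (y j.castSucc) ^ 2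
                + r (y (Fin.last n)))
              (Fin.snoc x s)) (k + 1)
        = 0 := by
  intro x s hs
  show cneg + ∑ k ∈ Finset.range (n + 1),
      c k * minorSum (hess (fF p r) (Fin.snoc x s)) (k + 1) = 0
  have hdiag : ∀ i : Fin n,
      (hess (fF p r) (Fin.snoc x s)) i.castSucc i.castSucc = p i s := fun i => by
    rw [hess_cc x hs hp hr i i]; simp
  have hoff : ∀ i j : Fin n, i ≠ j →
      (hess (fF p r) (Fin.snoc x s)) i.castSucc j.castSucc = 0 := fun i j hij => by
    rw [hess_cc x hs hp hr i j]; simp [hij]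
  have hminor : ∀ k : ℕ, minorSum (hess (fF p r) (Fin.snoc x s)) (k + 1)
      = esymmR n (k + 1) (fun j => p j s)
        + ∑ t ∈ (Finset.univ : Finset (Fin n)).powersetCard k,
            ((1 / 2 * ∑ j : Fin n, deriv (deriv (p j)) s * x j ^ 2 + deriv (deriv r) s)
                * ∏ i ∈ t, p i s
              - ∑ i ∈ t, deriv (p i) s * x i * (deriv (p i) s * x i)
                  * ∏ j ∈ t.erase i, p j s) := by
    intro k
    rw [minorSum_split]
    congr 1
    · unfold esymmR
      exact Finset.sum_congr rfl fun t ht =>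
        detA _ (fun j => p j s) hdiag hoff t (Finset.mem_powersetCard.1 ht).2
    · exact Finset.sum_congr rfl fun t _ =>
        detB _ (fun j => p j s) (fun i => deriv (p i) s * x i) _ hdiag hoff
          (fun i => hess_cl x hs hp hr i) (fun i => hess_lc x hs hp hr i)
          (hess_ll x hs hp hr) t
  have hkey : ∀ k ∈ Finset.range (n + 1),
      c k * minorSum (hess (fF p r) (Fin.snoc x s)) (k + 1)
        = c k * esymmR n (k + 1) (fun j => p j s)
          + (1 / 2 * ∑ j : Fin n, deriv (deriv (p j)) s * x j ^ 2 + deriv (deriv r) s)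
              * (c k * esymmR n k (fun j => p j s))
          - c k * ∑ t ∈ (Finset.univ : Finset (Fin n)).powersetCard k,
              ∑ i ∈ t, deriv (p i) s * x i * (deriv (p i) s * x i)
                * ∏ j ∈ t.erase i, p j s := by
    intro k _
    rw [hminor k, Finset.sum_sub_distrib, ← Finset.mul_sum]
    rw [show (∑ t ∈ (Finset.univ : Finset (Fin n)).powersetCard k, ∏ i ∈ t, p i s)
      = esymmR n k (fun j => p j s) from rfl]
    ring
  rw [Finset.sum_congr rfl hkey, Finset.sum_sub_distrib, Finset.sum_add_distrib,
    ← Finset.mul_sum]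
  have hS : ∑ k ∈ Finset.range (n + 1),
      c k * ∑ t ∈ (Finset.univ : Finset (Fin n)).powersetCard k,
        ∑ i ∈ t, deriv (p i) s * x i * (deriv (p i) s * x i) * ∏ j ∈ t.erase i, p j s
      = ∑ i : Fin n, x i ^ 2
          * ((∑ k ∈ Finset.range (n + 1), c k * esymmR n k (fun j => p j s))
              * deriv (deriv (p i)) s / 2) := by
    have step1 : ∀ k, (∑ t ∈ (Finset.univ : Finset (Fin n)).powersetCard k,
        ∑ i ∈ t, deriv (p i) s * x i * (deriv (p i) s * x i) * ∏ j ∈ t.erase i, p j s)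
        = ∑ i : Fin n, ∑ t ∈ ((Finset.univ : Finset (Fin n)).powersetCard k).filter
            (fun t => i ∈ t),
            deriv (p i) s * x i * (deriv (p i) s * x i) * ∏ j ∈ t.erase i, p j s := by
      intro k
      calc (∑ t ∈ (Finset.univ : Finset (Fin n)).powersetCard k, ∑ i ∈ t,
              deriv (p i) s * x i * (deriv (p i) s * x i) * ∏ j ∈ t.erase i, p j s)
          = ∑ t ∈ (Finset.univ : Finset (Fin n)).powersetCard k, ∑ i : Fin n,
              if i ∈ t then deriv (p i) s * x i * (deriv (p i) s * x i)
                * ∏ j ∈ t.erase i, p j s else 0 :=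
            Finset.sum_congr rfl fun t _ => by
              rw [Finset.sum_ite_mem, Finset.univ_inter]
        _ = ∑ i : Fin n, ∑ t ∈ (Finset.univ : Finset (Fin n)).powersetCard k,
              if i ∈ t then deriv (p i) s * x i * (deriv (p i) s * x i)
                * ∏ j ∈ t.erase i, p j s else 0 := Finset.sum_comm
        _ = _ := Finset.sum_congr rfl fun i _ => (Finset.sum_filter _ _).symm
    have step2 : ∀ k ∈ Finset.range (n + 1),
        c k * ∑ t ∈ (Finset.univ : Finset (Fin n)).powersetCard k,
          ∑ i ∈ t, deriv (p i) s * x i * (deriv (p i) s * x i) * ∏ j ∈ t.erase i, p j s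
        = ∑ i : Fin n, deriv (p i) s * x i * (deriv (p i) s * x i)
            * (c k * ∑ t ∈ ((Finset.univ : Finset (Fin n)).powersetCard k).filter
                (fun t => i ∈ t), ∏ j ∈ t.erase i, p j s) := by
      intro k _
      rw [step1 k, Finset.mul_sum]
      refine Finset.sum_congr rfl fun i _ => ?_
      rw [Finset.mul_sum, Finset.mul_sum, Finset.mul_sum]
      exact Finset.sum_congr rfl fun t _ => by ring
    rw [Finset.sum_congr rfl step2, Finset.sum_comm]
    refine Finset.sum_congr rfl fun i _ => ?_
    rw [← Finset.mul_sum]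
    have h2 := deriv_F_update c (fun j => p j s) i (p i s)
    have h1 := hODEp i s hs
    rw [h2] at h1
    linear_combination (-(x i ^ 2)) * h1
  rw [hS]
  have hCF : (1 / 2 * ∑ j : Fin n, deriv (deriv (p j)) s * x j ^ 2 + deriv (deriv r) s)
      * (∑ k ∈ Finset.range (n + 1), c k * esymmR n k (fun j => p j s))
      = (∑ i : Fin n, x i ^ 2
          * ((∑ k ∈ Finset.range (n + 1), c k * esymmR n k (fun j => p j s))
              * deriv (deriv (p i)) s / 2))
        + (∑ k ∈ Finset.range (n + 1), c k * esymmR n k (fun j => p j s))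
            * deriv (deriv r) s := by
    rw [add_mul, mul_assoc, Finset.sum_mul, Finset.mul_sum]
    congr 1
    · exact Finset.sum_congr rfl fun j _ => by ring
    · exact mul_comm _ _
  rw [hCF, hODEr s hs]
  have hE : ∑ k ∈ Finset.range (n + 1), c k * esymmR n (k + 1) (fun j => p j s)
      = ∑ k ∈ Finset.range n, c k * esymmR n (k + 1) (fun j => p j s) := by
    rw [Finset.sum_range_succ, esymmR_top, mul_zero, add_zero]
  have hG : ∑ k ∈ Finset.range (n + 1),
      (if k = 0 then cneg else c (k - 1)) * esymmR n k (fun j => p j s)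
      = cneg + ∑ k ∈ Finset.range n, c k * esymmR n (k + 1) (fun j => p j s) := by
    rw [Finset.sum_range_succ']
    simp [esymmR_zero]
    ring
  rw [hE]
  linarith [hG]
end
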